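/- arXiv:1705.04632 — 7 statements merged into one kernel-verified Lean document; each statement's English description precedes it below -/
import Mathlib

section
/- (Cutting Lemma) Let A be a finite m-coloured linear order and a < b elements of A such that (i) a and b have the same n-character, and (ii) for every x ∈ A with a < x ≤ b there is y ≤ a with the same n-character as x. Then A is (n+1)-equivalent to A \ (a, b]. -/
/-- A coloured linear order: a linear order together with a colouring map into `C`. -/
structure CLO (C : Type) where
  carrier : Type
  [ord : LinearOrder carrier]
  colour : carrier → C

attribute [instance] CLO.ord

namespace CLO

variable {C : Type}

/-- Induced coloured suborder on a subset. -/
def sub (A : CLO C) (s : Set A.carrier) : CLO C where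
  carrier := ↥s
  colour := fun x => A.colour x.val

/-- The coloured suborder `A^{<a}`. -/
def left (A : CLO C) (a : A.carrier) : CLO C := A.sub {x | x < a}

/-- The coloured suborder `A^{>a}`. -/
def right (A : CLO C) (a : A.carrier) : CLO C := A.sub {x | a < x}

/-- `n`-move Ehrenfeucht–Fraïssé equivalence of coloured linear orders, via the standard
back-and-forth characterization for linear orders. -/
def EFEquiv : ℕ → CLO C → CLO C → Prop
  | 0, _, _ => True
  | n + 1, A, B =>
      (∀ a : A.carrier, ∃ b : B.carrier, A.colour a = B.colour b ∧
        EFEquiv n (A.left a) (B.left b) ∧ EFEquiv n (A.right a) (B.right b)) ∧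
      (∀ b : B.carrier, ∃ a : A.carrier, A.colour a = B.colour b ∧
        EFEquiv n (A.left a) (B.left b) ∧ EFEquiv n (A.right a) (B.right b))

/-- `a` and `b` realize the same `n`-character (including the colour) in `A`. -/
def SameChar (n : ℕ) (A : CLO C) (a b : A.carrier) : Prop :=
  A.colour a = A.colour b ∧ EFEquiv n (A.left a) (A.left b) ∧
    EFEquiv n (A.right a) (A.right b)

/-- The finite coloured linear order (string) given by a list. -/
def ofList (l : List C) : CLO C where
  carrier := Fin l.length
  colour := l.get

/-- `A` is `≡ₙ`-optimal: no strictly shorter coloured linear order is `n`-equivalent to it. -/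
def Optimal (n : ℕ) (A : CLO C) : Prop :=
  ∀ B : CLO C, Finite B.carrier → EFEquiv n A B → Nat.card A.carrier ≤ Nat.card B.carrier

end CLO

/-!
Cutting out `(a, b]` does not change the `≡ₙ`-types on either side of a surviving point `p`,
because `≡ₙ` is a congruence for concatenation and `a`, `b` have the same `n`-character: for
`p ≤ a` the part above `p` is `(p, a]` followed by `A^{>a}` before the cut and by `A^{>b}` after
it; for `p > b` the part below `p` is `A^{≤b}` followed by `(b, p)` before the cut and `A^{≤a}`
followed by `(b, p)` after it. So in the `(n+1)`-move game player II answers a surviving point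
by itself and a point `x ∈ (a, b]` by a point `y ≤ a` of the same `n`-character.
-/

namespace Set

variable {α : Type*} [LinearOrder α] {s t : Set α} {p : α}

theorem union_inter_Iio_of_mem_left (hst : ∀ x ∈ s, ∀ y ∈ t, x < y) (hp : p ∈ s) :
    (s ∪ t) ∩ Iio p = s ∩ Iio p := by
  rw [union_inter_distrib_right, union_eq_left]
  exact fun y hy => ((hst p hp y hy.1).asymm hy.2).elim

theorem union_inter_Ioi_of_mem_left (hst : ∀ x ∈ s, ∀ y ∈ t, x < y) (hp : p ∈ s) :
    (s ∪ t) ∩ Ioi p = s ∩ Ioi p ∪ t := by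
  rw [union_inter_distrib_right, (inter_eq_left (t := Ioi p)).2 fun y hy => hst p hp y hy]

theorem union_inter_Iio_of_mem_right (hst : ∀ x ∈ s, ∀ y ∈ t, x < y) (hp : p ∈ t) :
    (s ∪ t) ∩ Iio p = s ∪ t ∩ Iio p := by
  rw [union_inter_distrib_right, (inter_eq_left (t := Iio p)).2 fun x hx => hst x hx p hp]

theorem union_inter_Ioi_of_mem_right (hst : ∀ x ∈ s, ∀ y ∈ t, x < y) (hp : p ∈ t) :
    (s ∪ t) ∩ Ioi p = t ∩ Ioi p := by
  rw [union_inter_distrib_right, union_eq_right]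
  exact fun x hx => ((hst x hx.1 p hp).asymm hx.2).elim

end Set

def OrderIso.subtypeEquiv {α β : Type*} [Preorder α] [Preorder β] (e : α ≃o β) {p : α → Prop}
    {q : β → Prop} (h : ∀ a, p a ↔ q (e a)) : {a // p a} ≃o {b // q b} where
  toEquiv := e.toEquiv.subtypeEquiv h
  map_rel_iff' := e.le_iff_le

namespace CLO

variable {C : Type} {n : ℕ} {A B D : CLO C}

theorem EFEquiv.of_orderIso (e : A.carrier ≃o B.carrier) (he : ∀ x, B.colour (e x) = A.colour x) :
    EFEquiv n A B := by
  induction n generalizing A B with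
  | zero => trivial
  | succ n ih =>
    have restrict (p : A.carrier) : EFEquiv n (A.left p) (B.left (e p)) ∧
        EFEquiv n (A.right p) (B.right (e p)) :=
      ⟨ih (e.subtypeEquiv fun _ => e.lt_iff_lt.symm) fun x => he x.1,
        ih (e.subtypeEquiv fun _ => e.lt_iff_lt.symm) fun x => he x.1⟩
    exact ⟨fun p => ⟨e p, (he p).symm, restrict p⟩,
      fun q => ⟨e.symm q, by simpa using (he (e.symm q)).symm, by simpa using restrict (e.symm q)⟩⟩

theorem EFEquiv.refl (n : ℕ) (A : CLO C) : EFEquiv n A A :=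
  .of_orderIso (OrderIso.refl _) fun _ => rfl

theorem EFEquiv.symm (h : EFEquiv n A B) : EFEquiv n B A := by
  induction n generalizing A B with
  | zero => trivial
  | succ n ih =>
    exact ⟨fun q => (h.2 q).imp fun _ ⟨hc, hl, hr⟩ => ⟨hc.symm, ih hl, ih hr⟩,
      fun p => (h.1 p).imp fun _ ⟨hc, hl, hr⟩ => ⟨hc.symm, ih hl, ih hr⟩⟩

theorem EFEquiv.trans (h₁ : EFEquiv n A B) (h₂ : EFEquiv n B D) : EFEquiv n A D := by
  induction n generalizing A B D with
  | zero => trivial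
  | succ n ih =>
    refine ⟨fun p => ?_, fun r => ?_⟩
    · obtain ⟨q, hc₁, hl₁, hr₁⟩ := h₁.1 p
      obtain ⟨r, hc₂, hl₂, hr₂⟩ := h₂.1 q
      exact ⟨r, hc₁.trans hc₂, ih hl₁ hl₂, ih hr₁ hr₂⟩
    · obtain ⟨q, hc₂, hl₂, hr₂⟩ := h₂.2 r
      obtain ⟨p, hc₁, hl₁, hr₁⟩ := h₁.2 q
      exact ⟨p, hc₁.trans hc₂, ih hl₁ hl₂, ih hr₁ hr₂⟩

theorem EFEquiv.of_succ (h : EFEquiv (n + 1) A B) : EFEquiv n A B := by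
  induction n generalizing A B with
  | zero => trivial
  | succ n ih =>
    exact ⟨fun p => (h.1 p).imp fun _ ⟨hc, hl, hr⟩ => ⟨hc, ih hl, ih hr⟩,
      fun q => (h.2 q).imp fun _ ⟨hc, hl, hr⟩ => ⟨hc, ih hl, ih hr⟩⟩

theorem efEquiv_sub_left (n : ℕ) (A : CLO C) (s : Set A.carrier) (p : s) :
    EFEquiv n ((A.sub s).left p) (A.sub (s ∩ Set.Iio p.1)) :=
  .of_orderIso ⟨⟨fun x => ⟨x.1.1, x.1.2, x.2⟩, fun y => ⟨⟨y.1, y.2.1⟩, y.2.2⟩,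
    fun _ => rfl, fun _ => rfl⟩, Iff.rfl⟩ fun _ => rfl

theorem efEquiv_sub_right (n : ℕ) (A : CLO C) (s : Set A.carrier) (p : s) :
    EFEquiv n ((A.sub s).right p) (A.sub (s ∩ Set.Ioi p.1)) :=
  .of_orderIso ⟨⟨fun x => ⟨x.1.1, x.1.2, x.2⟩, fun y => ⟨⟨y.1, y.2.1⟩, y.2.2⟩,
    fun _ => rfl, fun _ => rfl⟩, Iff.rfl⟩ fun _ => rfl

theorem efEquiv_sub_singleton (n : ℕ) {x : A.carrier} {y : B.carrier}
    (h : A.colour x = B.colour y) : EFEquiv n (A.sub {x}) (B.sub {y}) :=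
  .of_orderIso ⟨⟨fun _ => ⟨y, rfl⟩, fun _ => ⟨x, rfl⟩, fun z => Subtype.ext z.2.symm,
    fun z => Subtype.ext z.2.symm⟩,
    fun {z w} => iff_of_true le_rfl (Subtype.ext (z.2.trans w.2.symm)).le⟩
    fun z => ((congrArg A.colour z.2).trans h).symm

theorem efEquiv_sub_left_iff {s : Set A.carrier} {s' : Set B.carrier} (p : s) (q : s') :
    EFEquiv n ((A.sub s).left p) ((B.sub s').left q) ↔
      EFEquiv n (A.sub (s ∩ Set.Iio p.1)) (B.sub (s' ∩ Set.Iio q.1)) :=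
  ⟨fun h => ((efEquiv_sub_left n A s p).symm.trans h).trans (efEquiv_sub_left n B s' q),
    fun h => ((efEquiv_sub_left n A s p).trans h).trans (efEquiv_sub_left n B s' q).symm⟩

theorem efEquiv_sub_right_iff {s : Set A.carrier} {s' : Set B.carrier} (p : s) (q : s') :
    EFEquiv n ((A.sub s).right p) ((B.sub s').right q) ↔
      EFEquiv n (A.sub (s ∩ Set.Ioi p.1)) (B.sub (s' ∩ Set.Ioi q.1)) :=
  ⟨fun h => ((efEquiv_sub_right n A s p).symm.trans h).trans (efEquiv_sub_right n B s' q),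
    fun h => ((efEquiv_sub_right n A s p).trans h).trans (efEquiv_sub_right n B s' q).symm⟩

theorem EFEquiv.sub_union {s t : Set A.carrier} {s' t' : Set B.carrier}
    (hst : ∀ x ∈ s, ∀ y ∈ t, x < y) (hst' : ∀ x ∈ s', ∀ y ∈ t', x < y)
    (hs : EFEquiv n (A.sub s) (B.sub s')) (ht : EFEquiv n (A.sub t) (B.sub t')) :
    EFEquiv n (A.sub (s ∪ t)) (B.sub (s' ∪ t')) := by
  induction n generalizing A B s t s' t' with
  | zero => trivial
  | succ n ih =>
    have forth : ∀ {A B : CLO C} {s t : Set A.carrier} {s' t' : Set B.carrier},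
        (∀ x ∈ s, ∀ y ∈ t, x < y) → (∀ x ∈ s', ∀ y ∈ t', x < y) →
        EFEquiv (n + 1) (A.sub s) (B.sub s') → EFEquiv (n + 1) (A.sub t) (B.sub t') →
        ∀ p : ↥(s ∪ t), ∃ q : ↥(s' ∪ t'), A.colour p = B.colour q ∧
          EFEquiv n ((A.sub (s ∪ t)).left p) ((B.sub (s' ∪ t')).left q) ∧
          EFEquiv n ((A.sub (s ∪ t)).right p) ((B.sub (s' ∪ t')).right q) := by
      intro A B s t s' t' hst hst' hs ht p
      rcases p with ⟨p, hp | hp⟩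
      · obtain ⟨q, hc, hl, hr⟩ := hs.1 ⟨p, hp⟩
        refine ⟨⟨q.1, Or.inl q.2⟩, hc, ?_, ?_⟩
        · rw [efEquiv_sub_left_iff, Set.union_inter_Iio_of_mem_left hst hp,
            Set.union_inter_Iio_of_mem_left hst' q.2]
          exact (efEquiv_sub_left_iff _ _).1 hl
        · rw [efEquiv_sub_right_iff, Set.union_inter_Ioi_of_mem_left hst hp,
            Set.union_inter_Ioi_of_mem_left hst' q.2]
          exact ih (fun x hx y hy => hst x hx.1 y hy) (fun x hx y hy => hst' x hx.1 y hy)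
            ((efEquiv_sub_right_iff _ _).1 hr) ht.of_succ
      · obtain ⟨q, hc, hl, hr⟩ := ht.1 ⟨p, hp⟩
        refine ⟨⟨q.1, Or.inr q.2⟩, hc, ?_, ?_⟩
        · rw [efEquiv_sub_left_iff, Set.union_inter_Iio_of_mem_right hst hp,
            Set.union_inter_Iio_of_mem_right hst' q.2]
          exact ih (fun x hx y hy => hst x hx y hy.1) (fun x hx y hy => hst' x hx y hy.1)
            hs.of_succ ((efEquiv_sub_left_iff _ _).1 hl)
        · rw [efEquiv_sub_right_iff, Set.union_inter_Ioi_of_mem_right hst hp,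
            Set.union_inter_Ioi_of_mem_right hst' q.2]
          exact (efEquiv_sub_right_iff _ _).1 hr
    exact ⟨forth hst hst' hs ht, fun q => (forth hst' hst hs.symm ht.symm q).imp
      fun _ ⟨hc, hl, hr⟩ => ⟨hc.symm, hl.symm, hr.symm⟩⟩

theorem efEquiv_succ_sub_of_forall {K : Set A.carrier}
    (hleft : ∀ p ∈ K, EFEquiv n (A.sub (Set.Iio p)) (A.sub (K ∩ Set.Iio p)))
    (hright : ∀ p ∈ K, EFEquiv n (A.sub (Set.Ioi p)) (A.sub (K ∩ Set.Ioi p)))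
    (hout : ∀ x ∉ K, ∃ y ∈ K, SameChar n A x y) :
    EFEquiv (n + 1) A (A.sub K) := by
  have hK (p : A.carrier) (hp : p ∈ K) :
      EFEquiv n (A.left p) ((A.sub K).left ⟨p, hp⟩) ∧
        EFEquiv n (A.right p) ((A.sub K).right ⟨p, hp⟩) :=
    ⟨(hleft p hp).trans (efEquiv_sub_left n A K ⟨p, hp⟩).symm,
      (hright p hp).trans (efEquiv_sub_right n A K ⟨p, hp⟩).symm⟩
  refine ⟨fun p => ?_, fun q => ⟨q.1, rfl, hK q.1 q.2⟩⟩
  by_cases hp : p ∈ K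
  · exact ⟨⟨p, hp⟩, rfl, hK p hp⟩
  · obtain ⟨y, hy, hc, hl, hr⟩ := hout p hp
    exact ⟨⟨y, hy⟩, hc, hl.trans (hK y hy).1, hr.trans (hK y hy).2⟩

theorem efEquiv_sub_Iic {a b : A.carrier} (hc : A.colour a = A.colour b)
    (hl : EFEquiv n (A.left a) (A.left b)) : EFEquiv n (A.sub (Set.Iic a)) (A.sub (Set.Iic b)) := by
  rw [← Set.Iio_union_right, ← Set.Iio_union_right]
  exact hl.sub_union (fun x hx y hy => hy ▸ hx) (fun x hx y hy => hy ▸ hx)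
    (efEquiv_sub_singleton n hc)

theorem efEquiv_sub_Iio_compl_Ioc {a b p : A.carrier} (hab : a ≤ b) (hc : A.colour a = A.colour b)
    (hl : EFEquiv n (A.left a) (A.left b)) (hp : p ∈ (Set.Ioc a b)ᶜ) :
    EFEquiv n (A.sub (Set.Iio p)) (A.sub ((Set.Ioc a b)ᶜ ∩ Set.Iio p)) := by
  rw [Set.compl_Ioc] at hp ⊢
  rcases hp with hpa | hbp
  · rw [Set.inter_eq_right.2 ((Set.Iio_subset_Iic hpa).trans Set.subset_union_left)]
    exact .refl n _
  have hcut : (Set.Iic a ∪ Set.Ioi b) ∩ Set.Iio p = Set.Iic a ∪ Set.Ioo b p := by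
    ext x; simp only [Set.mem_inter_iff, Set.mem_union, Set.mem_Iic, Set.mem_Ioi, Set.mem_Iio,
      Set.mem_Ioo]; grind
  rw [hcut, ← Set.Iic_union_Ioo_eq_Iio hbp]
  exact (efEquiv_sub_Iic hc hl).symm.sub_union (fun x hx y hy => hx.trans_lt hy.1)
    (fun x hx y hy => (hx.trans hab).trans_lt hy.1) (.refl n _)

theorem efEquiv_sub_Ioi_compl_Ioc {a b p : A.carrier} (hab : a ≤ b)
    (hr : EFEquiv n (A.right a) (A.right b)) (hp : p ∈ (Set.Ioc a b)ᶜ) :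
    EFEquiv n (A.sub (Set.Ioi p)) (A.sub ((Set.Ioc a b)ᶜ ∩ Set.Ioi p)) := by
  rw [Set.compl_Ioc] at hp ⊢
  rcases hp with hpa | hbp
  · have hcut : (Set.Iic a ∪ Set.Ioi b) ∩ Set.Ioi p = Set.Ioc p a ∪ Set.Ioi b := by
      ext x; simp only [Set.mem_inter_iff, Set.mem_union, Set.mem_Iic, Set.mem_Ioi,
        Set.mem_Ioc]; grind
    rw [hcut, ← Set.Ioc_union_Ioi_eq_Ioi hpa]
    exact (EFEquiv.refl n _).sub_union (fun x hx y hy => hx.2.trans_lt hy)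
      (fun x hx y hy => (hx.2.trans hab).trans_lt hy) hr
  · rw [Set.inter_eq_right.2 ((Set.Ioi_subset_Ioi hbp.le).trans Set.subset_union_right)]
    exact .refl n _

end CLO

theorem stmt1_general {C : Type} (A : CLO C) (n : ℕ) (a b : A.carrier)
    (hab : a < b) (hchar : CLO.SameChar n A a b)
    (hbetween : ∀ x : A.carrier, a < x → x ≤ b →
      ∃ y : A.carrier, y ≤ a ∧ CLO.SameChar n A x y) :
    CLO.EFEquiv (n + 1) A (A.sub {x | ¬(a < x ∧ x ≤ b)}) := by
  obtain ⟨hc, hl, hr⟩ := hchar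
  refine CLO.efEquiv_succ_sub_of_forall (K := (Set.Ioc a b)ᶜ)
    (fun p hp => CLO.efEquiv_sub_Iio_compl_Ioc hab.le hc hl hp)
    (fun p hp => CLO.efEquiv_sub_Ioi_compl_Ioc hab.le hr hp) fun x hx => ?_
  obtain ⟨y, hya, hy⟩ := hbetween x (not_not.1 hx).1 (not_not.1 hx).2
  exact ⟨y, Set.notMem_Ioc_of_le hya, hy⟩

/-- Cutting Lemma: if `a < b` in a finite coloured linear order `A` realize the
same `n`-character, and every point in `(a, b]` has the same `n`-character as some point `≤ a`,
then `A ≡_{n+1} A \ (a, b]`. -/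
theorem stmt1 {C : Type} (A : CLO C) [Finite A.carrier] (n : ℕ) (a b : A.carrier)
    (hab : a < b) (hchar : CLO.SameChar n A a b)
    (hbetween : ∀ x : A.carrier, a < x → x ≤ b →
      ∃ y : A.carrier, y ≤ a ∧ CLO.SameChar n A x y) :
    CLO.EFEquiv (n + 1) A (A.sub {x | ¬(a < x ∧ x ≤ b)}) :=
  stmt1_general A n a b hab hchar hbetween
end

section
/- A T-configuration T = {x_i : 1 ≤ i ≤ m} ∪ {y_i : 1 ≤ i ≤ m} is associated with some m-coloured linear order if and only if for all i, j, i + j ≤ m + 1 implies x_i ≤ y_j. -/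
/-- `a` is the least point of `A` such that exactly `i` colours occur weakly to its left. -/
def CLO.IsXPoint {C : Type} (A : CLO C) (i : ℕ) (a : A.carrier) : Prop :=
  IsLeast {z : A.carrier | (A.colour '' Set.Iic z).ncard = i} a

/-- `a` is the greatest point of `A` such that exactly `j` colours occur weakly to its right. -/
def CLO.IsYPoint {C : Type} (A : CLO C) (j : ℕ) (a : A.carrier) : Prop :=
  IsGreatest {z : A.carrier | (A.colour '' Set.Ici z).ncard = j} a

/-- A `T`-configuration: a linear order `T = {x_1,...,x_m} ∪ {y_1,...,y_m}` with
`x` strictly increasing, `y` strictly decreasing, `x_1` least and `y_1` greatest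
(indices are 0-based: `x i` is the paper's `x_{i+1}`). -/
structure TConfig (m : ℕ) where
  carrier : Type
  [ord : LinearOrder carrier]
  x : Fin m → carrier
  y : Fin m → carrier
  x_mono : StrictMono x
  y_anti : StrictAnti y
  x_least : ∀ (h : 0 < m) (t : carrier), x ⟨0, h⟩ ≤ t
  y_greatest : ∀ (h : 0 < m) (t : carrier), t ≤ y ⟨0, h⟩
  cover : ∀ t : carrier, (∃ i, t = x i) ∨ (∃ j, t = y j)

attribute [instance] TConfig.ord

/-- `T` is the associated `T`-configuration of the coloured linear order `A`:
the order pattern of the `x`/`y` points of `A` matches that of `T`. -/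
def TConfig.Associated {m : ℕ} (T : TConfig m) {C : Type} (A : CLO C) : Prop :=
  ∃ xA yA : Fin m → A.carrier,
    (∀ i : Fin m, A.IsXPoint ((i : ℕ) + 1) (xA i) ∧ A.IsYPoint ((i : ℕ) + 1) (yA i)) ∧
    (∀ i j : Fin m, (T.x i ≤ T.y j ↔ xA i ≤ yA j) ∧ (T.y j ≤ T.x i ↔ yA j ≤ xA i))


/-!
Necessity: if `y_j < x_i`, the points before `x_i` carry at most `i - 1` colours and the points
after `y_j` at most `j - 1`, so `m ≤ i + j - 2`.

Sufficiency: colour `T` itself, giving colour `c` exactly to `x_c` and `y_{σ c}`, where `σ` is a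
permutation with `x_c ≤ y_{σ c}` that sends `c` to `k` whenever `x_c = y_k`. The reversal
`c ↦ m + 1 - c` satisfies the inequalities by hypothesis; among all permutations that do, one
with the most coincidences `x_c = y_{σ c}` has them all, since otherwise a transposition would
add one. The colours seen up to `t` are then `{c | x_c ≤ t}` and those from `t` on are
`{c | t ≤ y_{σ c}}`, which makes the `x_i` and `y_j` the associated points.
-/

open Set Function Equiv

namespace CLO

variable {C : Type} {A : CLO C} {n : ℕ} {a b z : A.carrier}

theorem IsXPoint.ncard_image_Iic_le (ha : A.IsXPoint (n + 1) a) (hz : z < a) :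
    (A.colour '' Iic z).ncard ≤ n := by
  have ha' : (A.colour '' Iic a).ncard = n + 1 := ha.1
  have hle : (A.colour '' Iic z).ncard ≤ n + 1 :=
    ha' ▸ ncard_le_ncard (image_mono (Iic_subset_Iic.2 hz.le)) (finite_of_ncard_pos (by omega))
  have hne : (A.colour '' Iic z).ncard ≠ n + 1 := fun h => (ha.2 h).not_gt hz
  omega

theorem IsYPoint.ncard_image_Ici_le (hb : A.IsYPoint (n + 1) b) (hz : b < z) :
    (A.colour '' Ici z).ncard ≤ n := by
  have hb' : (A.colour '' Ici b).ncard = n + 1 := hb.1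
  have hle : (A.colour '' Ici z).ncard ≤ n + 1 :=
    hb' ▸ ncard_le_ncard (image_mono (Ici_subset_Ici.2 hz.le)) (finite_of_ncard_pos (by omega))
  have hne : (A.colour '' Ici z).ncard ≠ n + 1 := fun h => (hb.2 h).not_gt hz
  omega

theorem IsXPoint.ncard_image_Iio_le [Finite A.carrier] (ha : A.IsXPoint (n + 1) a) :
    (A.colour '' Iio a).ncard ≤ n := by
  rcases (Iio a).eq_empty_or_nonempty with hempty | hne
  · simp [hempty]
  obtain ⟨z, hz, hmax⟩ := exists_max_image (Iio a) id (toFinite _) hne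
  have hIio : Iio a = Iic z := Subset.antisymm (fun w hw => hmax w hw) fun w hw => hw.trans_lt hz
  rw [hIio]
  exact ha.ncard_image_Iic_le hz

theorem IsXPoint.le_of_isYPoint [Finite A.carrier] (hA : Surjective A.colour) {i j : ℕ}
    (ha : A.IsXPoint (i + 1) a) (hb : A.IsYPoint (j + 1) b) (hij : i + j < Nat.card C) :
    a ≤ b := by
  by_contra! hba
  have : Nat.card C ≤ i + j :=
    calc Nat.card C = (A.colour '' (Iio a ∪ Ici a)).ncard := by
          rw [Iio_union_Ici, image_univ, hA.range_eq, ncard_univ]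
      _ ≤ (A.colour '' Iio a).ncard + (A.colour '' Ici a).ncard := by
          rw [image_union]
          exact ncard_union_le _ _
      _ ≤ i + j := add_le_add ha.ncard_image_Iio_le (hb.ncard_image_Ici_le hba)
  omega

end CLO

theorem TConfig.Associated.x_le_y {m : ℕ} {T : TConfig m} {C : Type} {A : CLO C}
    [Finite A.carrier] (hT : T.Associated A) (hA : Surjective A.colour) {i j : Fin m}
    (hij : (i : ℕ) + j < Nat.card C) : T.x i ≤ T.y j := by
  obtain ⟨xA, yA, hpoints, hpattern⟩ := hT
  exact (hpattern i j).1.2 ((hpoints i).1.le_of_isYPoint hA (hpoints j).2 hij)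

section Matching

variable {ι α : Type*} {x y : ι → α} {σ : Perm ι} {i k : ι}

theorem le_comp_swap_trans [Preorder α] [DecidableEq ι] (hσ : ∀ j, x j ≤ y (σ j))
    (hik : x i = y k) (j : ι) :
    x j ≤ y ((σ.trans (swap (σ i) k)) j) := by
  rw [Equiv.trans_apply]
  rcases eq_or_ne (σ j) (σ i) with hji | hji
  · rw [σ.injective hji, swap_apply_left, ← hik]
  rcases eq_or_ne (σ j) k with hjk | hjk
  · rw [hjk, swap_apply_right]
    calc x j ≤ y (σ j) := hσ j
      _ = x i := by rw [hjk, hik]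
      _ ≤ y (σ i) := hσ i
  · rw [swap_apply_of_ne_of_ne hji hjk]
    exact hσ j

theorem setOf_eq_ssubset_setOf_eq_swap_trans [DecidableEq ι] (hx : Injective x)
    (hy : Injective y) (hik : x i = y k) (hne : σ i ≠ k) :
    {j | x j = y (σ j)} ⊂ {j | x j = y ((σ.trans (swap (σ i) k)) j)} := by
  have hi : ¬ x i = y (σ i) := fun h => hne (hy (h.symm.trans hik))
  refine ssubset_iff_exists.2 ⟨fun j (hj : x j = y (σ j)) => ?_, i, ?_, hi⟩
  · have hji : σ j ≠ σ i := fun h => hi (σ.injective h ▸ hj)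
    have hjk : σ j ≠ k := fun h => hi (hx (hj.trans ((congrArg y h).trans hik.symm)) ▸ hj)
    show x j = y (swap (σ i) k (σ j))
    rw [swap_apply_of_ne_of_ne hji hjk, hj]
  · show x i = y (swap (σ i) k (σ i))
    rw [swap_apply_left, hik]

theorem exists_perm_le_and_eq_of_injective [Preorder α] [Finite ι] (hx : Injective x)
    (hy : Injective y) (hσ : ∀ j, x j ≤ y (σ j)) :
    ∃ τ : Perm ι, (∀ j, x j ≤ y (τ j)) ∧ ∀ i k, x i = y k → τ i = k := by
  classical
  have := Fintype.ofFinite ι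
  obtain ⟨τ, hτ, hmax⟩ := Finset.exists_max_image
    (Finset.univ.filter fun τ : Perm ι => ∀ j, x j ≤ y (τ j))
    (fun τ => {j | x j = y (τ j)}.ncard) ⟨σ, by simpa using hσ⟩
  simp only [Finset.mem_filter, Finset.mem_univ, true_and] at hτ hmax
  refine ⟨τ, hτ, fun i k hik => by_contra fun hne => ?_⟩
  exact (hmax _ (le_comp_swap_trans hτ hik)).not_gt
    (ncard_lt_ncard (setOf_eq_ssubset_setOf_eq_swap_trans hx hy hik hne))

end Matching

section FinCount

variable {m : ℕ} {β : Type*} [LinearOrder β]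

theorem StrictMono.isLeast_ncard_setOf_le {x : Fin m → β} (hx : StrictMono x) (i : Fin m) :
    IsLeast {z | {k | x k ≤ z}.ncard = i + 1} (x i) := by
  refine ⟨?_, fun z hz => le_of_not_gt fun hzi => ?_⟩
  · show {k | x k ≤ x i}.ncard = i + 1
    simp_rw [hx.le_iff_le]
    change (Iic i).ncard = i + 1
    rw [← Finset.coe_Iic, ncard_coe_finset, Fin.card_Iic]
  · have hsub : {k | x k ≤ z} ⊆ Finset.Iio i := fun k hk =>
      Finset.mem_Iio.2 (hx.lt_iff_lt.1 (lt_of_le_of_lt hk hzi))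
    have := ncard_le_ncard hsub (Finset.finite_toSet _)
    rw [hz, ncard_coe_finset, Fin.card_Iio] at this
    omega

theorem StrictAnti.isGreatest_ncard_setOf_ge {y : Fin m → β} (hy : StrictAnti y) (j : Fin m) :
    IsGreatest {z | {k | z ≤ y k}.ncard = j + 1} (y j) :=
  hy.dual_right.isLeast_ncard_setOf_le j

end FinCount

namespace TConfig

variable {m : ℕ} (T : TConfig m) (σ : Perm (Fin m))

theorem exists_eq_x_or_eq_y (t : T.carrier) : ∃ c, t = T.x c ∨ t = T.y (σ c) := by
  rcases T.cover t with ⟨i, rfl⟩ | ⟨k, rfl⟩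
  exacts [⟨i, .inl rfl⟩, ⟨σ.symm k, .inr (by rw [σ.apply_symm_apply])⟩]

noncomputable def colouring (t : T.carrier) : Fin m := (T.exists_eq_x_or_eq_y σ t).choose

theorem colouring_spec (t : T.carrier) :
    t = T.x (T.colouring σ t) ∨ t = T.y (σ (T.colouring σ t)) :=
  (T.exists_eq_x_or_eq_y σ t).choose_spec

noncomputable def toCLO : CLO (Fin m) where
  carrier := T.carrier
  colour := T.colouring σ

instance : Finite (T.toCLO σ).carrier :=
  Finite.of_surjective (Sum.elim T.x T.y) fun t => by
    rcases T.cover t with ⟨i, rfl⟩ | ⟨j, rfl⟩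
    exacts [⟨.inl i, rfl⟩, ⟨.inr j, rfl⟩]

variable {T σ}

theorem colouring_x (hσ : ∀ i k, T.x i = T.y k → σ i = k) (i : Fin m) :
    T.colouring σ (T.x i) = i := by
  rcases T.colouring_spec σ (T.x i) with h | h
  · exact T.x_mono.injective h.symm
  · exact σ.injective (hσ _ _ h).symm

theorem colouring_y (hσ : ∀ i k, T.x i = T.y k → σ i = k) (i : Fin m) :
    T.colouring σ (T.y (σ i)) = i := by
  rcases T.colouring_spec σ (T.y (σ i)) with h | h
  · exact σ.injective (hσ _ _ h.symm)
  · exact σ.injective (T.y_anti.injective h).symm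

theorem toCLO_colour_surjective (hσ : ∀ i k, T.x i = T.y k → σ i = k) :
    Surjective (T.toCLO σ).colour :=
  fun i => ⟨T.x i, colouring_x hσ i⟩

theorem x_colouring_le_and_le_y (hle : ∀ i, T.x i ≤ T.y (σ i)) (t : T.carrier) :
    T.x (T.colouring σ t) ≤ t ∧ t ≤ T.y (σ (T.colouring σ t)) := by
  rcases T.colouring_spec σ t with h | h
  · exact ⟨h.ge, h.le.trans (hle _)⟩
  · exact ⟨(hle _).trans h.ge, h.le⟩

theorem colouring_image_Iic (hle : ∀ i, T.x i ≤ T.y (σ i))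
    (hσ : ∀ i k, T.x i = T.y k → σ i = k) (t : T.carrier) :
    T.colouring σ '' Iic t = {i | T.x i ≤ t} :=
  Subset.antisymm
    (image_subset_iff.2 fun u hu => (x_colouring_le_and_le_y hle u).1.trans hu)
    fun i hi => ⟨T.x i, hi, colouring_x hσ i⟩

theorem ncard_colouring_image_Ici (hle : ∀ i, T.x i ≤ T.y (σ i))
    (hσ : ∀ i k, T.x i = T.y k → σ i = k) (t : T.carrier) :
    (T.colouring σ '' Ici t).ncard = {k | t ≤ T.y k}.ncard := by
  have himage : T.colouring σ '' Ici t = σ ⁻¹' {k | t ≤ T.y k} :=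
    Subset.antisymm
      (image_subset_iff.2 fun u hu => le_trans hu (x_colouring_le_and_le_y hle u).2)
      fun i hi => ⟨T.y (σ i), hi, colouring_y hσ i⟩
  rw [himage, ncard_preimage_of_injective_subset_range σ.injective (by simp)]

theorem associated_toCLO (hle : ∀ i, T.x i ≤ T.y (σ i))
    (hσ : ∀ i k, T.x i = T.y k → σ i = k) :
    T.Associated (T.toCLO σ) := by
  refine ⟨T.x, T.y, fun i => ⟨?_, ?_⟩, fun i j => ⟨Iff.rfl, Iff.rfl⟩⟩
  · show IsLeast {z | (T.colouring σ '' Iic z).ncard = i + 1} (T.x i)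
    simpa only [colouring_image_Iic hle hσ] using T.x_mono.isLeast_ncard_setOf_le i
  · show IsGreatest {z | (T.colouring σ '' Ici z).ncard = i + 1} (T.y i)
    simpa only [ncard_colouring_image_Ici hle hσ] using T.y_anti.isGreatest_ncard_setOf_ge i

end TConfig

theorem stmt4_general (m : ℕ) (T : TConfig m) :
    (∃ (C : Type) (_ : Fintype C), Fintype.card C = m ∧
      ∃ A : CLO C, Finite A.carrier ∧ Function.Surjective A.colour ∧ T.Associated A) ↔
    (∀ i j : Fin m, ((i : ℕ) + 1) + ((j : ℕ) + 1) ≤ m + 1 → T.x i ≤ T.y j) := by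
  constructor
  · rintro ⟨C, _, hC, A, _, hA, hT⟩ i j hij
    exact hT.x_le_y hA (by rw [Nat.card_eq_fintype_card, hC]; omega)
  · intro H
    have hrev : ∀ i, T.x i ≤ T.y (Fin.revPerm i) := fun i =>
      H i _ (by rw [Fin.revPerm_apply, Fin.val_rev]; omega)
    obtain ⟨σ, hle, hσ⟩ :=
      exists_perm_le_and_eq_of_injective T.x_mono.injective T.y_anti.injective hrev
    exact ⟨Fin m, inferInstance, Fintype.card_fin m, T.toCLO σ, inferInstance,
      TConfig.toCLO_colour_surjective hσ, TConfig.associated_toCLO hle hσ⟩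

/-- a `T`-configuration is associated with some `m`-coloured finite linear order
iff `i + j ≤ m + 1 → x_i ≤ y_j` (1-based; here indices are 0-based). -/
theorem stmt4 (m : ℕ) (hm : 0 < m) (T : TConfig m) :
    (∃ (C : Type) (_ : Fintype C), Fintype.card C = m ∧
      ∃ A : CLO C, Finite A.carrier ∧ Function.Surjective A.colour ∧ T.Associated A) ↔
    (∀ i j : Fin m, ((i : ℕ) + 1) + ((j : ℕ) + 1) ≤ m + 1 → T.x i ≤ T.y j) :=
  stmt4_general m T
end

section
/- In the associated T-configuration of a finite m-coloured linear order A, for each i the points y_{k+1},...,y_m where k is greatest with x_i ≤ y_k are distinctly coloured points lying strictly below x_i; consequently m + 1 ≤ i + k, i.e., at most i values of j satisfy y_j < x_{i+1} when i < m. -/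
/-!
Below `x_i` only `i - 1` colours occur, so any set of distinctly coloured points strictly
below `x_i` has at most `i - 1` elements. The points `y_j` are strictly decreasing and pairwise
distinctly coloured, because the colour of `y_j` does not reappear to its right (otherwise the
successor of `y_j` would be a later point with `j` colours to its right). Both bounds then come
from counting the `y_l` that lie below `x_i`.
-/

open Set

namespace CLO

variable {C : Type} {A : CLO C} [Finite A.carrier]

theorem ncard_image_colour_Iic_mono {a b : A.carrier} (h : a ≤ b) :
    (A.colour '' Iic a).ncard ≤ (A.colour '' Iic b).ncard :=
  ncard_le_ncard (image_mono (Iic_subset_Iic.2 h)) (toFinite _)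

theorem ncard_image_colour_Ici_anti {a b : A.carrier} (h : a ≤ b) :
    (A.colour '' Ici b).ncard ≤ (A.colour '' Ici a).ncard :=
  ncard_le_ncard (image_mono (Ici_subset_Ici.2 h)) (toFinite _)

theorem IsXPoint.ncard_image_colour_Iic_le_of_lt {i : ℕ} {a z : A.carrier}
    (ha : A.IsXPoint (i + 1) a) (hz : z < a) : (A.colour '' Iic z).ncard ≤ i := by
  have hle : (A.colour '' Iic z).ncard ≤ i + 1 := ha.1 ▸ ncard_image_colour_Iic_mono hz.le
  have hne : (A.colour '' Iic z).ncard ≠ i + 1 := fun h => (ha.2 h).not_gt hz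
  omega

theorem IsXPoint.ncard_le_of_injOn {i : ℕ} {a : A.carrier} (ha : A.IsXPoint (i + 1) a)
    {s : Set A.carrier} (hs : ∀ z ∈ s, z < a) (hinj : InjOn A.colour s) : s.ncard ≤ i := by
  obtain rfl | hne := s.eq_empty_or_nonempty
  · simp
  obtain ⟨z, hz, hmax⟩ := s.exists_max_image id (toFinite s) hne
  calc s.ncard = (A.colour '' s).ncard := hinj.ncard_image.symm
    _ ≤ (A.colour '' Iic z).ncard := ncard_le_ncard (image_mono hmax) (toFinite _)
    _ ≤ i := ha.ncard_image_colour_Iic_le_of_lt (hs z hz)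

theorem IsYPoint.lt_of_lt {j j' : ℕ} {a b : A.carrier} (ha : A.IsYPoint j a)
    (hb : A.IsYPoint j' b) (h : j < j') : b < a := by
  by_contra! hab
  have := ncard_image_colour_Ici_anti hab
  rw [ha.1, hb.1] at this
  omega

theorem IsYPoint.colour_notMem_image_Ioi {j : ℕ} {a : A.carrier} (ha : A.IsYPoint j a) :
    A.colour a ∉ A.colour '' Ioi a := by
  intro hmem
  obtain ⟨z, hz, hmin⟩ := (Ioi a).exists_min_image id (toFinite _) (hmem.imp fun _ => And.left)
  have hIoi : Ioi a = Ici z := Subset.antisymm hmin fun t ht => (mem_Ioi.1 hz).trans_le ht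
  have hzy : (A.colour '' Ici z).ncard = j := by
    rw [← hIoi, ← insert_eq_of_mem hmem, ← image_insert_eq, Ioi_insert]
    exact ha.1
  exact (ha.2 hzy).not_gt hz

theorem IsYPoint.colour_ne_of_lt {j j' : ℕ} {a b : A.carrier} (ha : A.IsYPoint j a)
    (hb : A.IsYPoint j' b) (h : j < j') : A.colour a ≠ A.colour b := fun hab =>
  hb.colour_notMem_image_Ioi ⟨a, ha.lt_of_lt hb h, hab⟩

variable {m : ℕ} {y : Fin m → A.carrier}

theorem strictAnti_of_isYPoint (hy : ∀ j : Fin m, A.IsYPoint ((j : ℕ) + 1) (y j)) :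
    StrictAnti y := fun _ _ h =>
  (hy _).lt_of_lt (hy _) (Nat.succ_lt_succ h)

theorem injective_colour_comp_of_isYPoint
    (hy : ∀ j : Fin m, A.IsYPoint ((j : ℕ) + 1) (y j)) : Function.Injective (A.colour ∘ y) := by
  intro j j' h
  by_contra hne
  rcases lt_or_gt_of_ne hne with hlt | hlt
  · exact (hy j).colour_ne_of_lt (hy j') (Nat.succ_lt_succ hlt) h
  · exact (hy j').colour_ne_of_lt (hy j) (Nat.succ_lt_succ hlt) h.symm

theorem IsXPoint.ncard_le_of_isYPoint {i : ℕ} {a : A.carrier} (ha : A.IsXPoint (i + 1) a)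
    (hy : ∀ j : Fin m, A.IsYPoint ((j : ℕ) + 1) (y j)) {S : Set (Fin m)}
    (hS : ∀ l ∈ S, y l < a) : S.ncard ≤ i := by
  rw [← ncard_image_of_injective S (strictAnti_of_isYPoint hy).injective]
  refine ha.ncard_le_of_injOn (by simpa using hS) ?_
  exact ((injective_colour_comp_of_isYPoint hy).injOn).image_of_comp

end CLO

theorem stmt5_general {C : Type} (m : ℕ) (A : CLO C) [Finite A.carrier]
    (x y : Fin m → A.carrier)
    (hx : ∀ i : Fin m, A.IsXPoint ((i : ℕ) + 1) (x i))
    (hy : ∀ j : Fin m, A.IsYPoint ((j : ℕ) + 1) (y j)) :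
    (∀ i k : Fin m, IsGreatest {l : Fin m | x i ≤ y l} k →
      ((∀ l : Fin m, k < l → y l < x i) ∧
        Set.InjOn (fun l => A.colour (y l)) {l : Fin m | k < l} ∧
        m + 1 ≤ ((i : ℕ) + 1) + ((k : ℕ) + 1))) ∧
    (∀ i : Fin m, {j : Fin m | y j < x i}.ncard ≤ (i : ℕ)) := by
  refine ⟨fun i k hk => ?_, fun i => (hx i).ncard_le_of_isYPoint hy fun _ h => h⟩
  have hbelow : ∀ l : Fin m, k < l → y l < x i := fun l hl =>
    lt_of_not_ge fun h => (hk.2 h).not_gt hl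
  refine ⟨hbelow, (CLO.injective_colour_comp_of_isYPoint hy).injOn, ?_⟩
  have hcount := (hx i).ncard_le_of_isYPoint hy (S := Ioi k) hbelow
  rw [← Finset.coe_Ioi, ncard_coe_finset, Fin.card_Ioi] at hcount
  omega

/-- in the associated `T`-configuration of a finite `m`-coloured linear order,
for each `i`, if `k` is greatest with `x_i ≤ y_k`, then the points `y_l` for `l > k` are
distinctly coloured points strictly below `x_i`, whence `m + 1 ≤ i + k`; consequently at most
`i` values of `j` satisfy `y_j < x_{i+1}` (all 1-based; indices below are 0-based). -/
theorem stmt5 {C : Type} (m : ℕ) (A : CLO C) [Finite A.carrier]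
    (hsurj : Function.Surjective A.colour) (hcard : Nat.card C = m)
    (x y : Fin m → A.carrier)
    (hx : ∀ i : Fin m, A.IsXPoint ((i : ℕ) + 1) (x i))
    (hy : ∀ j : Fin m, A.IsYPoint ((j : ℕ) + 1) (y j)) :
    (∀ i k : Fin m, IsGreatest {l : Fin m | x i ≤ y l} k →
      ((∀ l : Fin m, k < l → y l < x i) ∧
        Set.InjOn (fun l => A.colour (y l)) {l : Fin m | k < l} ∧
        m + 1 ≤ ((i : ℕ) + 1) + ((k : ℕ) + 1))) ∧
    (∀ i : Fin m, {j : Fin m | y j < x i}.ncard ≤ (i : ℕ)) :=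
  stmt5_general m A x y hx hy
end

section
/- Two finite m-coloured linear orders are 2-equivalent if and only if they have the same associated coloured T-configuration T and the same gap-colour function g, i.e., for each pair of consecutive points u < v of T, the set of colours occurring strictly between u and v is the same in both orders. -/
/-!
By `efEquiv_two_iff`, a point can be answered in the 2-move game exactly by the points with the
same colour and the same sets of colours on either side. The first occurrence of each colour is
an `x`-point, and the `x`-points have distinct colours, so the colours to the left of a point are
the colours of the `x`-points to its left; dually on the right with the `y`-points. Hence, once
the configuration points have the same colours in both orders, the profile of a point is its cut
in the configuration. Each configuration point is the only point with its profile, which forces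
the two configurations to be ordered alike; a point in a gap must be answered in the
corresponding gap, which forces equal gap colours. Conversely, configuration points are answered
by their counterparts and a point in a gap by a point of the same colour in the corresponding gap.
-/

open Set OrderDual

namespace CLO

section Points

variable {C α : Type*} [LinearOrder α] {m : ℕ}

def IsXPoints (F : α → C) (x : Fin m → α) : Prop :=
  ∀ i : Fin m, IsLeast {z | (F '' Iic z).ncard = i + 1} (x i)

def IsYPoints (F : α → C) (y : Fin m → α) : Prop :=
  ∀ j : Fin m, IsGreatest {z | (F '' Ici z).ncard = j + 1} (y j)

theorem image_Iic_eq_insert (F : α → C) (z : α) : F '' Iic z = insert (F z) (F '' Iio z) := by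
  rw [← Iio_insert, image_insert_eq]

theorem image_comp_ofDual_Iic (F : α → C) (a : α) :
    (F ∘ ofDual) '' Iic (toDual a) = F '' Ici a := by
  rw [image_comp, Iic_toDual, ofDual.image_preimage]

theorem image_comp_ofDual_Iio (F : α → C) (a : α) :
    (F ∘ ofDual) '' Iio (toDual a) = F '' Ioi a := by
  rw [image_comp, Iio_toDual, ofDual.image_preimage]

theorem IsYPoints.dual {F : α → C} {y : Fin m → α} (hy : IsYPoints F y) :
    IsXPoints (F ∘ ofDual) (toDual ∘ y) := by
  refine fun j => ⟨?_, fun w hw => (hy j).2 ?_⟩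
  · show ((F ∘ ofDual) '' Iic (toDual (y j))).ncard = j + 1
    rw [image_comp_ofDual_Iic]
    exact (hy j).1
  · have hw : ((F ∘ ofDual) '' Iic (toDual (ofDual w))).ncard = j + 1 := hw
    rwa [image_comp_ofDual_Iic] at hw

variable [Finite α] {F : α → C} {x : Fin m → α}

theorem IsXPoints.strictMono (hx : IsXPoints F x) : StrictMono x := by
  intro i j hij
  by_contra! hji
  have := ncard_le_ncard (image_mono (f := F) (Iic_subset_Iic.2 hji)) (toFinite _)
  rw [(hx i).1, (hx j).1] at this
  exact (Fin.lt_def.1 hij).not_ge (by omega)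

theorem IsXPoints.colour_notMem (hx : IsXPoints F x) (i : Fin m) : F (x i) ∉ F '' Iio (x i) := by
  intro hmem
  obtain ⟨z, hz, hmax⟩ := exists_max_image (Iio (x i)) id (toFinite _) (hmem.imp fun _ h => h.1)
  have hIic : Iic z = Iio (x i) := ext fun w => ⟨fun h => h.trans_lt hz, hmax w⟩
  have hcard : (F '' Iic z).ncard = i + 1 := by
    rw [hIic, ← (hx i).1, image_Iic_eq_insert, insert_eq_of_mem hmem]
  exact hz.not_ge ((hx i).2 hcard)

theorem IsXPoints.eq_of_colour_notMem (hx : IsXPoints F x) {w : α} {k : Fin m}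
    (hw : F w ∉ F '' Iio w) (hk : (F '' Iic w).ncard = k + 1) : w = x k := by
  have hIio : (F '' Iio w).ncard = k := by
    rw [image_Iic_eq_insert, ncard_insert_of_notMem hw (toFinite _)] at hk
    omega
  refine ((hx k).unique ⟨hk, fun z hz => ?_⟩).symm
  by_contra! hzw
  have := ncard_le_ncard (image_mono (f := F) (Iic_subset_Iio.2 hzw)) (toFinite _)
  have hz : (F '' Iic z).ncard = k + 1 := hz
  omega

theorem exists_ncard_image_Iic_eq (hm : (range F).ncard ≤ m) (z : α) :
    ∃ k : Fin m, (F '' Iic z).ncard = k + 1 := by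
  have hpos : 0 < (F '' Iic z).ncard := (ncard_pos (toFinite _)).2 ⟨F z, z, le_rfl, rfl⟩
  have hle : (F '' Iic z).ncard ≤ m :=
    (ncard_le_ncard (image_subset_range F _) (toFinite _)).trans hm
  exact ⟨⟨(F '' Iic z).ncard - 1, by omega⟩, by simp only; omega⟩

theorem IsXPoints.exists_le (hm : (range F).ncard ≤ m) (hx : IsXPoints F x) (a : α) :
    ∃ k, x k ≤ a :=
  (exists_ncard_image_Iic_eq hm a).imp fun k hk => (hx k).2 hk

theorem IsXPoints.image_Iio (hm : (range F).ncard ≤ m) (hx : IsXPoints F x) (a : α) :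
    F '' Iio a = (F ∘ x) '' {k | x k < a} := by
  refine Subset.antisymm ?_ (image_comp F x _ ▸ image_mono fun _ ⟨k, hk, h⟩ => h ▸ hk)
  rintro _ ⟨z, hz, rfl⟩
  obtain ⟨w, hwz, hmin⟩ := exists_min_image {w | F w = F z} id (toFinite _) ⟨z, rfl⟩
  have hw : F w ∉ F '' Iio w := fun ⟨w', hw', he⟩ => (hmin w' (he.trans hwz)).not_gt hw'
  obtain ⟨k, hk⟩ := exists_ncard_image_Iic_eq hm w
  obtain rfl := hx.eq_of_colour_notMem hw hk
  exact ⟨k, (hmin z rfl).trans_lt hz, hwz⟩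

theorem IsXPoints.injective_comp (hx : IsXPoints F x) : Function.Injective (F ∘ x) := by
  intro k l h
  by_contra hne
  rcases lt_or_gt_of_ne hne with hkl | hlk
  · exact hx.colour_notMem l ⟨x k, hx.strictMono hkl, h⟩
  · exact hx.colour_notMem k ⟨x l, hx.strictMono hlk, h.symm⟩

variable {β : Type*} [LinearOrder β] [Finite β] {G : β → C} {u : Fin m → β}

theorem IsXPoints.eq_of_image_Iio_eq (hx : IsXPoints F x) (hu : IsXPoints G u) {i : Fin m}
    {b : β} (hc : F (x i) = G b) (hL : F '' Iio (x i) = G '' Iio b) : b = u i := by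
  refine hu.eq_of_colour_notMem (hc ▸ hL ▸ hx.colour_notMem i) ?_
  rw [image_Iic_eq_insert, ← hc, ← hL, ← image_Iic_eq_insert, (hx i).1]

theorem IsXPoints.image_Iio_eq_iff (hmF : (range F).ncard ≤ m) (hmG : (range G).ncard ≤ m)
    (hx : IsXPoints F x) (hu : IsXPoints G u) (hcol : ∀ k, F (x k) = G (u k)) (a : α) (b : β) :
    F '' Iio a = G '' Iio b ↔ ∀ k, (x k < a ↔ u k < b) := by
  rw [hx.image_Iio hmF, hu.image_Iio hmG, show F ∘ x = G ∘ u from funext hcol,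
    hu.injective_comp.image_injective.eq_iff, Set.ext_iff]
  rfl

variable {y : Fin m → α} {v : Fin m → β}

theorem IsYPoints.strictAnti (hy : IsYPoints F y) : StrictAnti y :=
  fun _ _ h => hy.dual.strictMono h

theorem IsYPoints.exists_ge (hm : (range F).ncard ≤ m) (hy : IsYPoints F y) (a : α) :
    ∃ k, a ≤ y k :=
  hy.dual.exists_le (by rwa [EquivLike.range_comp]) (toDual a)

theorem IsYPoints.eq_of_image_Ioi_eq (hy : IsYPoints F y) (hv : IsYPoints G v) {j : Fin m}
    {b : β} (hc : F (y j) = G b) (hR : F '' Ioi (y j) = G '' Ioi b) : b = v j :=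
  hy.dual.eq_of_image_Iio_eq hv.dual (b := toDual b) hc
    ((image_comp_ofDual_Iio F (y j)).trans (hR.trans (image_comp_ofDual_Iio G b).symm))

theorem IsYPoints.image_Ioi_eq_iff (hmF : (range F).ncard ≤ m) (hmG : (range G).ncard ≤ m)
    (hy : IsYPoints F y) (hv : IsYPoints G v) (hcol : ∀ k, F (y k) = G (v k)) (a : α) (b : β) :
    F '' Ioi a = G '' Ioi b ↔ ∀ k, (a < y k ↔ b < v k) := by
  rw [← image_comp_ofDual_Iio, ← image_comp_ofDual_Iio]
  exact hy.dual.image_Iio_eq_iff (by rwa [EquivLike.range_comp])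
    (by rwa [EquivLike.range_comp]) hv.dual hcol (toDual a) (toDual b)

end Points

section Gaps

variable {ι α : Type*} [LinearOrder α] {p : ι → α}

def IsConsecutive (p : ι → α) (s t : ι) : Prop :=
  p s < p t ∧ ∀ w, ¬(p s < p w ∧ p w < p t)

variable {s t : ι} {a : α}

theorem IsConsecutive.lt_iff_le (h : IsConsecutive p s t) (hs : p s < a) (ht : a < p t)
    (w : ι) : p w < a ↔ p w ≤ p s :=
  ⟨fun hw => not_lt.1 fun hsw => h.2 w ⟨hsw, hw.trans ht⟩, fun hw => hw.trans_lt hs⟩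

theorem IsConsecutive.lt_iff_ge (h : IsConsecutive p s t) (hs : p s < a) (ht : a < p t)
    (w : ι) : a < p w ↔ p t ≤ p w :=
  ⟨fun hw => not_lt.1 fun hwt => h.2 w ⟨hs.trans hw, hwt⟩, fun hw => ht.trans_le hw⟩

variable {β : Type*} [LinearOrder β] {q : ι → β}

theorem lt_iff_lt_of_forall_le_iff_le (hpq : ∀ s t, p s ≤ p t ↔ q s ≤ q t) (s t : ι) :
    p s < p t ↔ q s < q t := by
  simpa only [not_le] using (hpq t s).not

theorem IsConsecutive.of_le_iff_le (h : IsConsecutive p s t)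
    (hpq : ∀ s t, p s ≤ p t ↔ q s ≤ q t) : IsConsecutive q s t := by
  simp only [IsConsecutive, lt_iff_lt_of_forall_le_iff_le hpq] at h ⊢
  exact h

theorem IsConsecutive.lt_iff_lt (h : IsConsecutive p s t) (hpq : ∀ s t, p s ≤ p t ↔ q s ≤ q t)
    {b : β} (ha : p s < a ∧ a < p t) (hb : q s < b ∧ b < q t) (w : ι) :
    (p w < a ↔ q w < b) ∧ (a < p w ↔ b < q w) :=
  have h' := h.of_le_iff_le hpq
  ⟨(h.lt_iff_le ha.1 ha.2 w).trans ((hpq w s).trans (h'.lt_iff_le hb.1 hb.2 w).symm),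
    (h.lt_iff_ge ha.1 ha.2 w).trans ((hpq t w).trans (h'.lt_iff_ge hb.1 hb.2 w).symm)⟩

theorem exists_isConsecutive [Finite ι] (ha : ∀ w, p w ≠ a) (hs : ∃ s, p s < a)
    (ht : ∃ t, a < p t) : ∃ s t, IsConsecutive p s t ∧ p s < a ∧ a < p t := by
  obtain ⟨s, hs, hsmax⟩ := exists_max_image {w | p w < a} p (toFinite _) hs
  obtain ⟨t, ht, htmin⟩ := exists_min_image {w | a < p w} p (toFinite _) ht
  refine ⟨s, t, ⟨hs.trans ht, fun w ⟨hsw, hwt⟩ => ?_⟩, hs, ht⟩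
  rcases lt_trichotomy (p w) a with hwa | hwa | hwa
  · exact (hsmax w hwa).not_gt hsw
  · exact ha w hwa
  · exact (htmin w hwa).not_gt hwt

theorem sumElim_le_iff {m : ℕ} {x y : Fin m → α} {u v : Fin m → β} (hx : StrictMono x)
    (hy : StrictAnti y) (hu : StrictMono u) (hv : StrictAnti v)
    (h : ∀ i j, (x i ≤ y j ↔ u i ≤ v j) ∧ (y j ≤ x i ↔ v j ≤ u i)) (s t : Fin m ⊕ Fin m) :
    Sum.elim x y s ≤ Sum.elim x y t ↔ Sum.elim u v s ≤ Sum.elim u v t := by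
  rcases s with i | i <;> rcases t with j | j
  · exact hx.le_iff_le.trans hu.le_iff_le.symm
  · exact (h i j).1
  · exact (h j i).2
  · exact hy.le_iff_ge.trans hv.le_iff_ge.symm

end Gaps

section Profiles

variable {C α β : Type*} [LinearOrder α] [LinearOrder β]

def SameProfile (F : α → C) (G : β → C) (a : α) (b : β) : Prop :=
  F a = G b ∧ F '' Iio a = G '' Iio b ∧ F '' Ioi a = G '' Ioi b

theorem SameProfile.symm {F : α → C} {G : β → C} {a : α} {b : β} (h : SameProfile F G a b) :
    SameProfile G F b a :=
  ⟨h.1.symm, h.2.1.symm, h.2.2.symm⟩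

end Profiles

section EF

variable {C : Type}

theorem efEquiv_one_iff (X Y : CLO C) : EFEquiv 1 X Y ↔ range X.colour = range Y.colour := by
  simp only [EFEquiv, and_true, Subset.antisymm_iff, range_subset_iff, mem_range, eq_comm]

theorem range_colour_left (X : CLO C) (a : X.carrier) :
    range (X.left a).colour = X.colour '' Iio a :=
  (image_eq_range X.colour (Iio a)).symm

theorem range_colour_right (X : CLO C) (a : X.carrier) :
    range (X.right a).colour = X.colour '' Ioi a :=
  (image_eq_range X.colour (Ioi a)).symm

theorem efEquiv_two_iff (X Y : CLO C) :
    EFEquiv 2 X Y ↔ (∀ a, ∃ b, SameProfile X.colour Y.colour a b) ∧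
      (∀ b, ∃ a, SameProfile X.colour Y.colour a b) := by
  rw [EFEquiv]
  simp only [efEquiv_one_iff, range_colour_left, range_colour_right, SameProfile]

end EF

section Matching

variable {C α β : Type*} [LinearOrder α] [Finite α] [LinearOrder β] [Finite β] {m : ℕ}
  {F : α → C} {G : β → C} {x y : Fin m → α} {u v : Fin m → β}

theorem sameProfile_xPoint (hx : IsXPoints F x) (hu : IsXPoints G u)
    (h : ∀ a, ∃ b, SameProfile F G a b) (i : Fin m) : SameProfile F G (x i) (u i) := by
  obtain ⟨b, hb⟩ := h (x i)
  obtain rfl := hx.eq_of_image_Iio_eq hu hb.1 hb.2.1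
  exact hb

theorem sameProfile_yPoint (hy : IsYPoints F y) (hv : IsYPoints G v)
    (h : ∀ a, ∃ b, SameProfile F G a b) (j : Fin m) : SameProfile F G (y j) (v j) := by
  obtain ⟨b, hb⟩ := h (y j)
  obtain rfl := hy.eq_of_image_Ioi_eq hv hb.1 hb.2.2
  exact hb

theorem le_iff_le_of_sameProfile (hmF : (range F).ncard ≤ m) (hmG : (range G).ncard ≤ m)
    (hy : IsYPoints F y) (hv : IsYPoints G v) (hX : ∀ i, SameProfile F G (x i) (u i))
    (hY : ∀ j, SameProfile F G (y j) (v j)) (i j : Fin m) :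
    (x i ≤ y j ↔ u i ≤ v j) ∧ (y j ≤ x i ↔ v j ≤ u i) := by
  have hlt : x i < y j ↔ u i < v j :=
    (hy.image_Ioi_eq_iff hmF hmG hv (fun k => (hY k).1) _ _).1 (hX i).2.2 j
  have heq : x i = y j ↔ u i = v j := by
    refine ⟨fun h => ?_, fun h => ?_⟩
    · have hyu : SameProfile F G (y j) (u i) := h ▸ hX i
      exact hy.eq_of_image_Ioi_eq hv hyu.1 hyu.2.2
    · have hvx : SameProfile G F (v j) (x i) := h ▸ (hX i).symm
      exact hv.eq_of_image_Ioi_eq hy hvx.1 hvx.2.2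
  exact ⟨by simp only [le_iff_lt_or_eq, hlt, heq], by simp only [← not_lt, hlt]⟩

theorem image_Ioo_subset_of_sameProfile (hmF : (range F).ncard ≤ m)
    (hmG : (range G).ncard ≤ m) (hx : IsXPoints F x) (hy : IsYPoints F y)
    (hu : IsXPoints G u) (hv : IsYPoints G v) (hcol : ∀ i, F (x i) = G (u i) ∧ F (y i) = G (v i))
    (hpat : ∀ s t, Sum.elim x y s ≤ Sum.elim x y t ↔ Sum.elim u v s ≤ Sum.elim u v t)
    (hAB : ∀ a, ∃ b, SameProfile F G a b) {s t : Fin m ⊕ Fin m}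
    (hst : IsConsecutive (Sum.elim x y) s t) :
    F '' Ioo (Sum.elim x y s) (Sum.elim x y t) ⊆ G '' Ioo (Sum.elim u v s) (Sum.elim u v t) := by
  rintro _ ⟨a, ⟨has, hat⟩, rfl⟩
  obtain ⟨b, hb⟩ := hAB a
  have hL k : u k < b ↔ u k ≤ Sum.elim u v s :=
    ((hx.image_Iio_eq_iff hmF hmG hu (fun k => (hcol k).1) a b).1 hb.2.1 k).symm.trans
      ((hst.lt_iff_le has hat (.inl k)).trans (hpat (.inl k) s))
  have hR k : b < v k ↔ Sum.elim u v t ≤ v k :=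
    ((hy.image_Ioi_eq_iff hmF hmG hv (fun k => (hcol k).2) a b).1 hb.2.2 k).symm.trans
      ((hst.lt_iff_ge has hat (.inr k)).trans (hpat t (.inr k)))
  have hst' := (hst.of_le_iff_le hpat).1
  refine ⟨b, ⟨?_, ?_⟩, hb.1.symm⟩
  · rcases s with i | j
    · exact (hL i).2 le_rfl
    · refine lt_of_le_of_ne (not_lt.1 fun hbj => ((hR j).1 hbj).not_gt hst') fun hjb => ?_
      subst hjb
      exact has.ne (hv.eq_of_image_Ioi_eq hy hb.1.symm hb.2.2.symm).symm
  · rcases t with i | j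
    · refine lt_of_le_of_ne (not_lt.1 fun hib => ((hL i).1 hib).not_gt hst') fun hbi => ?_
      subst hbi
      exact hat.ne (hu.eq_of_image_Iio_eq hx hb.1.symm hb.2.1.symm)
    · exact (hR j).2 le_rfl

theorem exists_sameProfile (hmF : (range F).ncard ≤ m) (hmG : (range G).ncard ≤ m)
    (hx : IsXPoints F x) (hy : IsYPoints F y) (hu : IsXPoints G u) (hv : IsYPoints G v)
    (hcol : ∀ i, F (x i) = G (u i) ∧ F (y i) = G (v i))
    (hpat : ∀ s t, Sum.elim x y s ≤ Sum.elim x y t ↔ Sum.elim u v s ≤ Sum.elim u v t)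
    (hgap : ∀ s t, IsConsecutive (Sum.elim x y) s t →
      F '' Ioo (Sum.elim x y s) (Sum.elim x y t) = G '' Ioo (Sum.elim u v s) (Sum.elim u v t))
    (a : α) : ∃ b, SameProfile F G a b := by
  have hL := hx.image_Iio_eq_iff hmF hmG hu fun k => (hcol k).1
  have hR := hy.image_Ioi_eq_iff hmF hmG hv fun k => (hcol k).2
  by_cases ha : ∃ s, Sum.elim x y s = a
  · obtain ⟨s, rfl⟩ := ha
    have hlt := lt_iff_lt_of_forall_le_iff_le hpat
    refine ⟨Sum.elim u v s, ?_, (hL _ _).2 fun k => hlt (.inl k) s,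
      (hR _ _).2 fun k => hlt s (.inr k)⟩
    rcases s with i | i
    exacts [(hcol i).1, (hcol i).2]
  · rw [not_exists] at ha
    obtain ⟨i, hi⟩ := hx.exists_le hmF a
    obtain ⟨j, hj⟩ := hy.exists_ge hmF a
    obtain ⟨s, t, hst, has, hat⟩ := exists_isConsecutive ha
      ⟨.inl i, hi.lt_of_ne (ha (.inl i))⟩ ⟨.inr j, hj.lt_of_ne' (ha (.inr j))⟩
    have hFa : F a ∈ F '' Ioo (Sum.elim x y s) (Sum.elim x y t) :=
      mem_image_of_mem F ⟨has, hat⟩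
    rw [hgap s t hst] at hFa
    obtain ⟨b, hb, hab⟩ := hFa
    have hcut := hst.lt_iff_lt hpat ⟨has, hat⟩ hb
    exact ⟨b, hab.symm, (hL a b).2 fun k => (hcut (.inl k)).1,
      (hR a b).2 fun k => (hcut (.inr k)).2⟩

end Matching

end CLO

open CLO

theorem stmt7_general {C : Type} [Fintype C] (m : ℕ) (hC : Fintype.card C = m)
    (A B : CLO C) [Finite A.carrier] [Finite B.carrier]
    (xA yA : Fin m → A.carrier) (xB yB : Fin m → B.carrier)
    (hxA : ∀ i : Fin m, A.IsXPoint ((i : ℕ) + 1) (xA i))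
    (hyA : ∀ j : Fin m, A.IsYPoint ((j : ℕ) + 1) (yA j))
    (hxB : ∀ i : Fin m, B.IsXPoint ((i : ℕ) + 1) (xB i))
    (hyB : ∀ j : Fin m, B.IsYPoint ((j : ℕ) + 1) (yB j)) :
    CLO.EFEquiv 2 A B ↔
      ((∀ i j : Fin m, (xA i ≤ yA j ↔ xB i ≤ yB j) ∧ (yA j ≤ xA i ↔ yB j ≤ xB i)) ∧
       (∀ i : Fin m, A.colour (xA i) = B.colour (xB i) ∧ A.colour (yA i) = B.colour (yB i)) ∧
       (∀ s t : Fin m ⊕ Fin m,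
         (Sum.elim xA yA s < Sum.elim xA yA t ∧
           ∀ u : Fin m ⊕ Fin m,
             ¬(Sum.elim xA yA s < Sum.elim xA yA u ∧ Sum.elim xA yA u < Sum.elim xA yA t)) →
         A.colour '' {z | Sum.elim xA yA s < z ∧ z < Sum.elim xA yA t} =
           B.colour '' {z | Sum.elim xB yB s < z ∧ z < Sum.elim xB yB t})) := by
  have hmA : (range A.colour).ncard ≤ m :=
    hC ▸ (ncard_le_card _).trans_eq Nat.card_eq_fintype_card
  have hmB : (range B.colour).ncard ≤ m :=
    hC ▸ (ncard_le_card _).trans_eq Nat.card_eq_fintype_card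
  replace hxA : IsXPoints A.colour xA := hxA
  replace hyA : IsYPoints A.colour yA := hyA
  replace hxB : IsXPoints B.colour xB := hxB
  replace hyB : IsYPoints B.colour yB := hyB
  have hpat := sumElim_le_iff hxA.strictMono hyA.strictAnti hxB.strictMono hyB.strictAnti
  rw [efEquiv_two_iff]
  constructor
  · rintro ⟨hAB, hBA⟩
    have hX := sameProfile_xPoint hxA hxB hAB
    have hY := sameProfile_yPoint hyA hyB hAB
    have hcross := le_iff_le_of_sameProfile hmA hmB hyA hyB hX hY
    have hcol i : _ ∧ _ := And.intro (hX i).1 (hY i).1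
    replace hpat := hpat hcross
    refine ⟨hcross, hcol, fun s t (hst : IsConsecutive _ s t) => ?_⟩
    exact (image_Ioo_subset_of_sameProfile hmA hmB hxA hyA hxB hyB hcol hpat hAB hst).antisymm
      (image_Ioo_subset_of_sameProfile hmB hmA hxB hyB hxA hyA
        (fun i => (hcol i).imp Eq.symm Eq.symm) (fun s t => (hpat s t).symm)
        (fun b => (hBA b).imp fun _ => SameProfile.symm) (hst.of_le_iff_le hpat))
  · rintro ⟨hcross, hcol, hgap⟩
    replace hpat := hpat hcross
    refine ⟨exists_sameProfile hmA hmB hxA hyA hxB hyB hcol hpat hgap, fun b => ?_⟩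
    have hpat' s t := (hpat s t).symm
    obtain ⟨a, ha⟩ := exists_sameProfile hmB hmA hxB hyB hxA hyA
      (fun i => (hcol i).imp Eq.symm Eq.symm) hpat'
      (fun s t hst => (hgap s t (hst.of_le_iff_le hpat')).symm) b
    exact ⟨a, ha.symm⟩

/-- two finite `m`-coloured linear orders are `≡₂` iff they have the same
associated coloured `T`-configuration and the same gap-colour function `g` on consecutive
pairs of configuration points. -/
theorem stmt7 {C : Type} [Fintype C] (m : ℕ) (hC : Fintype.card C = m)
    (A B : CLO C) [Finite A.carrier] [Finite B.carrier]
    (hA : Function.Surjective A.colour) (hB : Function.Surjective B.colour)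
    (xA yA : Fin m → A.carrier) (xB yB : Fin m → B.carrier)
    (hxA : ∀ i : Fin m, A.IsXPoint ((i : ℕ) + 1) (xA i))
    (hyA : ∀ j : Fin m, A.IsYPoint ((j : ℕ) + 1) (yA j))
    (hxB : ∀ i : Fin m, B.IsXPoint ((i : ℕ) + 1) (xB i))
    (hyB : ∀ j : Fin m, B.IsYPoint ((j : ℕ) + 1) (yB j)) :
    CLO.EFEquiv 2 A B ↔
      ((∀ i j : Fin m, (xA i ≤ yA j ↔ xB i ≤ yB j) ∧ (yA j ≤ xA i ↔ yB j ≤ xB i)) ∧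
       (∀ i : Fin m, A.colour (xA i) = B.colour (xB i) ∧ A.colour (yA i) = B.colour (yB i)) ∧
       (∀ s t : Fin m ⊕ Fin m,
         (Sum.elim xA yA s < Sum.elim xA yA t ∧
           ∀ u : Fin m ⊕ Fin m,
             ¬(Sum.elim xA yA s < Sum.elim xA yA u ∧ Sum.elim xA yA u < Sum.elim xA yA t)) →
         A.colour '' {z | Sum.elim xA yA s < z ∧ z < Sum.elim xA yA t} =
           B.colour '' {z | Sum.elim xB yB s < z ∧ z < Sum.elim xB yB t})) :=
  stmt7_general m hC A B xA yA xB yB hxA hyA hxB hyB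
end

section
/- For m, k ≥ 2, there exists a cyclic string of length m^k over the alphabet {0,1,...,m-1} such that every string of length k over {0,...,m-1} occurs exactly once as a substring of k cyclically consecutive entries (a de Bruijn sequence exists). -/
/-!
Words of length `n + 1` are the vertices of the de Bruijn graph, with an edge `v → w` when `w`
is `v` with its first letter dropped and a letter appended; a de Bruijn sequence is the sequence
of first letters along a Hamiltonian cycle. Call a permutation `σ` of the words a cycle cover if
every `σ w` is a successor of `w` (a rotation of all words is one), and take a cycle cover whose
cycle through a fixed word `w₀` is as large as possible. If that cycle `C` missed a word, then
some `x ∈ C` and `y ∉ C` would have the same tail: otherwise `C` would be closed under successors,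
hence everything, as the de Bruijn graph is strongly connected. But then `σ * swap x y` is again a
cycle cover, and in it the cycles of `x` and `y` are merged, contradicting maximality.
-/

open Equiv Equiv.Perm Function MulAction

namespace Equiv.Perm

variable {β : Type*} {σ : Perm β} {s : Set β} {x y z : β}

theorem SameCycle.mem_of_mapsTo [Finite β] (hs : Set.MapsTo σ s s) (hxz : σ.SameCycle x z)
    (hx : x ∈ s) : z ∈ s := by
  obtain ⟨i, rfl⟩ := hxz.exists_nat_pow_eq
  rw [← iterate_eq_pow]
  exact hs.iterate i hx

theorem sameCycle_of_cycle_closed [Finite β] {τ : Perm β} {c : β} (hc : τ.SameCycle x (σ c))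
    (hclosed : ∀ w, σ.SameCycle c w → w ≠ c → τ.SameCycle x w → τ.SameCycle x (σ w))
    (hcz : σ.SameCycle c z) : τ.SameCycle x z := by
  have hmaps : Set.MapsTo σ {w | σ.SameCycle c w → τ.SameCycle x w}
      {w | σ.SameCycle c w → τ.SameCycle x w} := fun w hw hcσw => by
    have hcw : σ.SameCycle c w := sameCycle_apply_right.1 hcσw
    by_cases hwc : w = c
    · rwa [hwc]
    · exact hclosed w hcw hwc (hw hcw)
  exact SameCycle.mem_of_mapsTo hmaps (sameCycle_apply_left.2 hcz) (fun _ => hc) hcz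

theorem sameCycle_mul_swap [Finite β] [DecidableEq β] (hxy : ¬σ.SameCycle x y)
    (hz : σ.SameCycle x z ∨ σ.SameCycle y z) : (σ * swap x y).SameCycle x z := by
  set τ := σ * swap x y
  have hτ : ∀ w, w ≠ x → w ≠ y → σ w = τ w := fun w hwx hwy => by
    simp [τ, swap_apply_of_ne_of_ne hwx hwy]
  have hy : ∀ w, σ.SameCycle y w → τ.SameCycle x w := fun _ =>
    sameCycle_of_cycle_closed (by simpa [τ] using sameCycle_apply_right.2 (SameCycle.refl τ x))
      fun v hyv hvy hv => by
        rw [hτ v (by rintro rfl; exact hxy hyv.symm) hvy]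
        exact sameCycle_apply_right.2 hv
  have hx : ∀ w, σ.SameCycle x w → τ.SameCycle x w := fun _ =>
    sameCycle_of_cycle_closed (by simpa [τ] using sameCycle_apply_right.2 (hy y .rfl))
      fun v hxv hvx hv => by
        rw [hτ v hvx (by rintro rfl; exact hxy hxv)]
        exact sameCycle_apply_right.2 hv
  exact hz.elim (hx z) (hy z)

theorem exists_equiv_zmod_of_forall_sameCycle [Fintype β] {b : β} (h : ∀ x, σ.SameCycle b x) :
    ∃ e : ZMod (Fintype.card β) ≃ β, ∀ (i : ZMod (Fintype.card β)) (j : ℕ),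
      e (i + j) = (σ ^ j) (e i) := by
  have horbit : ∀ x, x ∈ orbit (Subgroup.zpowers σ) b := fun x => by
    obtain ⟨i, rfl⟩ := h x
    exact ⟨⟨σ ^ i, Subgroup.zpow_mem_zpowers σ i⟩, rfl⟩
  have hperiod : minimalPeriod (σ • ·) b = Fintype.card β := by
    classical
    rw [minimalPeriod_eq_card, Fintype.card_congr (Equiv.subtypeUnivEquiv horbit)]
  rw [← hperiod]
  refine ⟨(orbitZPowersEquiv σ b).symm.trans (Equiv.subtypeUnivEquiv horbit), fun i j => ?_⟩
  have hij : i + j = ((j + ZMod.cast i : ℤ) : ZMod (minimalPeriod (σ • ·) b)) := by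
    push_cast [ZMod.intCast_zmod_cast]; ring
  simp only [Equiv.trans_apply, Equiv.subtypeUnivEquiv_apply]
  rw [hij, orbitZPowersEquiv_symm_apply', orbitZPowersEquiv_symm_apply]
  simp [zpow_add, mul_smul]

end Equiv.Perm

namespace DeBruijn

variable {α : Type*} {n : ℕ}

def Adj (v w : Fin (n + 1) → α) : Prop := Fin.init w = Fin.tail v

theorem reflTransGen_adj (v w : Fin (n + 1) → α) : Relation.ReflTransGen Adj v w := by
  -- `u` is reachable from `v` as soon as it starts with `v` shifted left by `j` letters
  suffices h : ∀ j ≤ n + 1, ∀ u : Fin (n + 1) → α,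
      (∀ i (hi : i + j < n + 1), u ⟨i, by omega⟩ = v ⟨i + j, hi⟩) →
        Relation.ReflTransGen Adj v u from
    h (n + 1) le_rfl w fun i hi => by omega
  intro j hj
  induction j with
  | zero => intro u hu; rw [show u = v from funext fun i => hu i i.2]
  | succ j ih =>
    intro u hu
    have hu' := ih (by omega) (Fin.cons (v ⟨j, by omega⟩) (Fin.init u)) fun i hi => by
      cases i with
      | zero => exact (Fin.cons_zero _ _).trans (congrArg v (Fin.ext (Nat.zero_add j).symm))
      | succ i =>
        exact (Fin.cons_succ _ _ ⟨i, by omega⟩).trans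
          ((hu i (by omega)).trans (congrArg v (Fin.ext (by simp only; omega))))
    exact hu'.tail (Fin.tail_cons (α := fun _ => α) _ (Fin.init u)).symm

def IsCycleCover (σ : Perm (Fin (n + 1) → α)) : Prop := ∀ w, Adj w (σ w)

theorem isCycleCover_rotate :
    IsCycleCover ((finRotate (n + 1)).symm.arrowCongr (Equiv.refl α)) := by
  intro w
  funext i
  simp [Fin.init, Fin.tail]

section IsCycleCover

variable {σ : Perm (Fin (n + 1) → α)}

theorem IsCycleCover.mul_swap [DecidableEq α] (hσ : IsCycleCover σ) {x y : Fin (n + 1) → α}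
    (hxy : Fin.tail x = Fin.tail y) : IsCycleCover (σ * swap x y) := by
  intro w
  rcases eq_or_ne w x with rfl | hwx
  · simpa [Adj, hxy] using hσ y
  rcases eq_or_ne w y with rfl | hwy
  · simpa [Adj, hxy] using hσ x
  · simpa [swap_apply_of_ne_of_ne hwx hwy] using hσ w

theorem IsCycleCover.pow_apply (hσ : IsCycleCover σ) (w : Fin (n + 1) → α) (i : Fin (n + 1))
    (j : ℕ) (h : i + j < n + 1) : (σ ^ j) w i = w ⟨i + j, h⟩ := by
  induction j generalizing w with
  | zero => rfl
  | succ j ih =>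
    rw [pow_succ, Perm.mul_apply, ih _ (by omega)]
    exact congrFun (hσ w) ⟨i + j, by omega⟩

theorem IsCycleCover.forall_sameCycle (hσ : IsCycleCover σ) {w₀ : Fin (n + 1) → α}
    (h : ∀ x y, σ.SameCycle w₀ x → Fin.tail x = Fin.tail y → σ.SameCycle w₀ y)
    (w : Fin (n + 1) → α) : σ.SameCycle w₀ w := by
  -- the cycle of `w₀` is closed under `Adj`: the predecessor `σ⁻¹ w'` of a successor `w'` of `v`
  -- has the same tail as `v`
  induction reflTransGen_adj w₀ w with
  | refl => rfl
  | @tail v w' _ hvw ih =>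
    have htail : Fin.tail v = Fin.tail (σ.symm w') := by
      rw [← hσ (σ.symm w'), σ.apply_symm_apply]; exact hvw.symm
    simpa using (sameCycle_apply_right (f := σ)).2 (h v _ ih htail)

def IsDeBruijn {N : ℕ} (k : ℕ) (s : ZMod N → α) : Prop :=
  ∀ w : Fin k → α, ∃! i : ZMod N, ∀ j : Fin k, s (i + (j : ℕ)) = w j

theorem IsCycleCover.exists_isDeBruijn [Fintype α] (hσ : IsCycleCover σ) {w₀ : Fin (n + 1) → α}
    (hcyc : ∀ w, σ.SameCycle w₀ w) :
    ∃ s : ZMod (Fintype.card α ^ (n + 1)) → α, IsDeBruijn (n + 1) s := by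
  rw [show Fintype.card α ^ (n + 1) = Fintype.card (Fin (n + 1) → α) by simp]
  obtain ⟨e, he⟩ := exists_equiv_zmod_of_forall_sameCycle hcyc
  have hwindow : ∀ i w, (∀ j : Fin (n + 1), e (i + (j : ℕ)) 0 = w j) ↔ e i = w := by
    intro i w
    simp only [he, funext_iff]
    exact forall_congr' fun j => by rw [hσ.pow_apply _ 0 j (by simp; omega)]; simp
  exact ⟨fun i => e i 0, fun w => by simpa only [hwindow] using e.bijective.existsUnique w⟩

end IsCycleCover

theorem exists_isCycleCover_forall_sameCycle [Finite α] (w₀ : Fin (n + 1) → α) :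
    ∃ σ, IsCycleCover σ ∧ ∀ w, σ.SameCycle w₀ w := by
  classical
  have := Fintype.ofFinite α
  obtain ⟨σ, hσ, hmax⟩ := (Finset.univ.filter IsCycleCover).exists_max_image
    (fun σ => {w | σ.SameCycle w₀ w}.ncard)
    ⟨_, Finset.mem_filter.2 ⟨Finset.mem_univ _, isCycleCover_rotate⟩⟩
  replace hσ : IsCycleCover σ := (Finset.mem_filter.1 hσ).2
  refine ⟨σ, hσ, hσ.forall_sameCycle fun x y hx hxy => ?_⟩
  by_contra hy
  have hxy' : ¬σ.SameCycle x y := fun h => hy (hx.trans h)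
  have hmerge : ∀ z, σ.SameCycle x z ∨ σ.SameCycle y z → (σ * swap x y).SameCycle w₀ z :=
    fun z hz => (sameCycle_mul_swap hxy' (.inl hx.symm)).symm.trans (sameCycle_mul_swap hxy' hz)
  have hlt : {w | σ.SameCycle w₀ w} ⊂ {w | (σ * swap x y).SameCycle w₀ w} :=
    (Set.ssubset_iff_of_subset fun z hz => hmerge z (.inl (hx.symm.trans hz))).2
      ⟨y, hmerge y (.inr .rfl), hy⟩
  have := hmax _ (Finset.mem_filter.2 ⟨Finset.mem_univ _, hσ.mul_swap hxy⟩)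
  have := Set.ncard_lt_ncard hlt
  omega

theorem exists_isDeBruijn [Fintype α] [Nonempty α] (n : ℕ) :
    ∃ s : ZMod (Fintype.card α ^ (n + 1)) → α, IsDeBruijn (n + 1) s := by
  obtain ⟨_, hσ, hcyc⟩ :=
    exists_isCycleCover_forall_sameCycle fun _ : Fin (n + 1) => Classical.arbitrary α
  exact hσ.exists_isDeBruijn hcyc

end DeBruijn

/-- de Bruijn sequences exist: for `m, k ≥ 2` there is a cyclic string of
length `m^k` over an `m`-letter alphabet in which every word of length `k` occurs at exactly
one (cyclic) position. -/
theorem stmt13 (m k : ℕ) (hm : 2 ≤ m) (hk : 2 ≤ k) :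
    ∃ s : ZMod (m ^ k) → Fin m, ∀ w : Fin k → Fin m,
      ∃! i : ZMod (m ^ k), ∀ j : Fin k, s (i + ((j : ℕ) : ZMod (m ^ k))) = w j := by
  obtain ⟨n, rfl⟩ : ∃ n, k = n + 1 := ⟨k - 1, by omega⟩
  have : Nonempty (Fin m) := ⟨⟨0, by omega⟩⟩
  have := DeBruijn.exists_isDeBruijn (α := Fin m) n
  rwa [Fintype.card_fin] at this
end

section
/- The binary strings rrbrbrbb and rrbbrrbb of length 8 are 2-equivalent, and both are ≡_2-optimal (no shorter string is 2-equivalent to them); hence optimal representatives of ≡_2-classes need not be unique. -/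
/-! `A ≡₂ B` holds iff `A` and `B` realize the same set of 1-characters. In each of the two
strings the eight positions have pairwise distinct 1-characters, so every string `≡₂`-equivalent
to it has at least eight positions; what remains is a finite computation of 1-characters. -/

namespace CLO

variable {C : Type}

def colours (A : CLO C) : Set C := Set.range A.colour

theorem efequiv_one_iff {A B : CLO C} : EFEquiv 1 A B ↔ A.colours = B.colours := by
  simp only [EFEquiv, and_true, Set.Subset.antisymm_iff, colours, Set.range_subset_iff,
    Set.mem_range]
  exact and_congr (forall_congr' fun _ => exists_congr fun _ => eq_comm) Iff.rfl

def char (A : CLO C) (a : A.carrier) : Set C × C × Set C :=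
  ((A.left a).colours, A.colour a, (A.right a).colours)

theorem efequiv_two_iff {A B : CLO C} : EFEquiv 2 A B ↔ Set.range A.char = Set.range B.char := by
  have hmatch (a : A.carrier) (b : B.carrier) :
      (A.colour a = B.colour b ∧ EFEquiv 1 (A.left a) (B.left b) ∧
        EFEquiv 1 (A.right a) (B.right b)) ↔ A.char a = B.char b := by
    simp only [efequiv_one_iff, char, Prod.mk.injEq]
    tauto
  simp only [EFEquiv.eq_2 (n := 1), hmatch, Set.Subset.antisymm_iff, Set.range_subset_iff,
    Set.mem_range]
  exact and_congr (forall_congr' fun _ => exists_congr fun _ => eq_comm) Iff.rfl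

theorem optimal_two_of_injective_char {A : CLO C} (h : Function.Injective A.char) :
    Optimal 2 A := by
  intro B _ hAB
  calc Nat.card A.carrier = Nat.card (Set.range A.char) := (Nat.card_range_of_injective h).symm
    _ = Nat.card (Set.range B.char) := by rw [efequiv_two_iff.mp hAB]
    _ ≤ Nat.card B.carrier := Finite.card_range_le B.char

def coeChar : Finset C × C × Finset C → Set C × C × Set C :=
  Prod.map (↑) (Prod.map id (↑))

theorem coeChar_injective : Function.Injective (coeChar (C := C)) :=
  Finset.coe_injective.prodMap (Function.injective_id.prodMap Finset.coe_injective)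

variable [DecidableEq C]

def listChar (l : List C) (i : Fin l.length) : Finset C × C × Finset C :=
  ((Finset.univ.filter (· < i)).image l.get, l.get i, (Finset.univ.filter (i < ·)).image l.get)

theorem colours_sub_ofList (l : List C) (p : Fin l.length → Prop) [DecidablePred p] :
    ((ofList l).sub {x | p x}).colours = ↑((Finset.univ.filter p).image l.get) := by
  ext c
  simp only [colours, sub, ofList, Set.mem_range, Subtype.exists, Finset.coe_image,
    Finset.coe_filter, Finset.mem_univ, true_and, Set.mem_image, Set.mem_ofPred_eq, exists_prop]

theorem char_ofList (l : List C) : (ofList l).char = coeChar ∘ listChar l :=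
  funext fun (i : Fin l.length) =>
    Prod.ext (colours_sub_ofList l (· < i)) (Prod.ext rfl (colours_sub_ofList l (i < ·)))

theorem range_char_ofList (l : List C) :
    Set.range (ofList l).char = coeChar '' ↑(Finset.univ.image (listChar l)) := by
  rw [char_ofList, Fintype.coe_image_univ]
  exact Set.range_comp _ _

theorem efequiv_two_ofList_iff {l l' : List C} :
    EFEquiv 2 (ofList l) (ofList l') ↔
      Finset.univ.image (listChar l) = Finset.univ.image (listChar l') := by
  rw [efequiv_two_iff, range_char_ofList, range_char_ofList,
    (Set.image_injective.mpr coeChar_injective).eq_iff, Finset.coe_inj]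

theorem optimal_two_ofList {l : List C} (h : Function.Injective (listChar l)) :
    Optimal 2 (ofList l) :=
  optimal_two_of_injective_char (by rw [char_ofList]; exact coeChar_injective.comp h)

end CLO

/-- with `r = true`, `b = false`, the strings `rrbrbrbb` and `rrbbrrbb` are
distinct, `2`-equivalent, and both `≡₂`-optimal; hence optimal representatives of
`≡₂`-classes need not be unique. -/
theorem stmt16 :
    ([true, true, false, true, false, true, false, false] ≠
      [true, true, false, false, true, true, false, false]) ∧
    CLO.EFEquiv 2 (CLO.ofList [true, true, false, true, false, true, false, false])
      (CLO.ofList [true, true, false, false, true, true, false, false]) ∧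
    CLO.Optimal 2 (CLO.ofList [true, true, false, true, false, true, false, false]) ∧
    CLO.Optimal 2 (CLO.ofList [true, true, false, false, true, true, false, false]) :=
  ⟨by decide, CLO.efequiv_two_ofList_iff.mpr (by decide),
    CLO.optimal_two_ofList (by decide), CLO.optimal_two_ofList (by decide)⟩
end

section
/- In the binary string A = rbrbrbrbrbrbrbr of length 15, the 7th and 9th positions realize the same 2-character, and all other positions realize pairwise distinct 2-characters, so A realizes exactly 14 distinct 2-characters. -/
/-!
A position splits a string `l` into the prefix `l.take i` and the suffix `l.drop (i + 1)`, and
the coloured sub-orders to its left and right are isomorphic to these strings. Since `EFEquiv`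
is invariant under colour-preserving isomorphism, the back-and-forth clause of `EFEquiv (n + 1)`
on strings refers only to `EFEquiv n` on shorter strings, which makes it a terminating Boolean
recursion. Comparing 2-characters of positions of `rbrbrbrbrbrbrbr` is then a finite
computation. The only coincidence is between positions 6 and 8: their left parts `rbrbrb`,
`rbrbrbrb` are `≡₂`, and so are their right parts `brbrbrbr`, `brbrbr`.
-/

namespace CLO

variable {C : Type}

structure Iso (A B : CLO C) where
  toOrderIso : A.carrier ≃o B.carrier
  colour_apply (a : A.carrier) : B.colour (toOrderIso a) = A.colour a

namespace Iso

variable {A B : CLO C}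

def symm (f : Iso A B) : Iso B A where
  toOrderIso := f.toOrderIso.symm
  colour_apply b := by rw [← f.colour_apply, OrderIso.apply_symm_apply]

@[simp]
theorem symm_toOrderIso (f : Iso A B) : f.symm.toOrderIso = f.toOrderIso.symm := rfl

noncomputable def ofStrictMono (f : A.carrier → B.carrier) (hf : StrictMono f)
    (hsurj : Function.Surjective f) (hcol : ∀ a, B.colour (f a) = A.colour a) : Iso A B where
  toOrderIso := StrictMono.orderIsoOfSurjective f hf hsurj
  colour_apply := hcol

def sub (f : Iso A B) (s : Set A.carrier) (t : Set B.carrier)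
    (h : ∀ a, a ∈ s ↔ f.toOrderIso a ∈ t) : Iso (A.sub s) (B.sub t) where
  toOrderIso :=
    { toEquiv := f.toOrderIso.toEquiv.subtypeEquiv h
      map_rel_iff' := f.toOrderIso.le_iff_le }
  colour_apply a := f.colour_apply a.1

def left (f : Iso A B) (a : A.carrier) : Iso (A.left a) (B.left (f.toOrderIso a)) :=
  f.sub _ _ fun _ => f.toOrderIso.lt_iff_lt.symm

def right (f : Iso A B) (a : A.carrier) : Iso (A.right a) (B.right (f.toOrderIso a)) :=
  f.sub _ _ fun _ => f.toOrderIso.lt_iff_lt.symm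

end Iso

theorem EFEquiv.of_iso {A A' B B' : CLO C} :
    ∀ {n : ℕ}, Iso A A' → Iso B B' → EFEquiv n A B → EFEquiv n A' B'
  | 0, _, _, _ => trivial
  | n + 1, f, g, ⟨hA, hB⟩ => by
    constructor
    · intro a'
      obtain ⟨b, hc, hl, hr⟩ := hA (f.symm.toOrderIso a')
      refine ⟨g.toOrderIso b, ?_, ?_, ?_⟩
      · rw [g.colour_apply, ← hc, f.symm.colour_apply]
      · simpa using EFEquiv.of_iso (f.left _) (g.left b) hl
      · simpa using EFEquiv.of_iso (f.right _) (g.right b) hr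
    · intro b'
      obtain ⟨a, hc, hl, hr⟩ := hB (g.symm.toOrderIso b')
      refine ⟨f.toOrderIso a, ?_, ?_, ?_⟩
      · rw [f.colour_apply, hc, g.symm.colour_apply]
      · simpa using EFEquiv.of_iso (f.left a) (g.left _) hl
      · simpa using EFEquiv.of_iso (f.right a) (g.right _) hr

theorem EFEquiv.congr_iso {n : ℕ} {A A' B B' : CLO C} (f : Iso A A') (g : Iso B B') :
    EFEquiv n A B ↔ EFEquiv n A' B' :=
  ⟨.of_iso f g, .of_iso f.symm g.symm⟩

noncomputable def isoLeftOfList (l : List C) (a : Fin l.length) :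
    Iso ((ofList l).left a) (ofList (l.take a)) :=
  Iso.ofStrictMono
    (fun x => ⟨x.1.1, by have : x.1.1 < a.1 := x.2; rw [List.length_take]; omega⟩)
    (fun _ _ h => h)
    (fun y => by
      have hy : y.1 < min a.1 l.length := List.length_take ▸ y.2
      exact ⟨⟨⟨y.1, by omega⟩, show y.1 < a.1 by omega⟩, rfl⟩)
    (fun _ => List.getElem_take)

noncomputable def isoRightOfList (l : List C) (a : Fin l.length) :
    Iso ((ofList l).right a) (ofList (l.drop (a.1 + 1))) :=
  Iso.ofStrictMono
    (fun x => ⟨x.1.1 - (a.1 + 1), by have : a.1 < x.1.1 := x.2; rw [List.length_drop]; omega⟩)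
    (fun x y (h : x.1.1 < y.1.1) => show x.1.1 - (a.1 + 1) < y.1.1 - (a.1 + 1) by
      have : a.1 < x.1.1 := x.2
      omega)
    (fun y => by
      have hy : y.1 < l.length - (a.1 + 1) := List.length_drop ▸ y.2
      exact ⟨⟨⟨a.1 + 1 + y.1, by omega⟩, show a.1 < a.1 + 1 + y.1 by omega⟩,
        Fin.ext (Nat.add_sub_cancel_left ..)⟩)
    (fun x => by
      have : a.1 < x.1.1 := x.2
      show (l.drop (a.1 + 1))[x.1.1 - (a.1 + 1)]'_ = l[x.1.1]
      rw [List.getElem_drop]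
      congr 1
      omega)

theorem efEquiv_left_ofList_iff {n : ℕ} {l m : List C} (a : Fin l.length) (b : Fin m.length) :
    EFEquiv n ((ofList l).left a) ((ofList m).left b) ↔
      EFEquiv n (ofList (l.take a)) (ofList (m.take b)) :=
  EFEquiv.congr_iso (isoLeftOfList l a) (isoLeftOfList m b)

theorem efEquiv_right_ofList_iff {n : ℕ} {l m : List C} (a : Fin l.length) (b : Fin m.length) :
    EFEquiv n ((ofList l).right a) ((ofList m).right b) ↔
      EFEquiv n (ofList (l.drop (a + 1))) (ofList (m.drop (b + 1))) :=
  EFEquiv.congr_iso (isoRightOfList l a) (isoRightOfList m b)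

theorem efEquiv_succ_ofList_iff {n : ℕ} {l m : List C} :
    EFEquiv (n + 1) (ofList l) (ofList m) ↔
      (∀ i : Fin l.length, ∃ j : Fin m.length, l.get i = m.get j ∧
        EFEquiv n (ofList (l.take i)) (ofList (m.take j)) ∧
        EFEquiv n (ofList (l.drop (i + 1))) (ofList (m.drop (j + 1)))) ∧
      (∀ j : Fin m.length, ∃ i : Fin l.length, l.get i = m.get j ∧
        EFEquiv n (ofList (l.take i)) (ofList (m.take j)) ∧
        EFEquiv n (ofList (l.drop (i + 1))) (ofList (m.drop (j + 1)))) :=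
  and_congr
    (forall_congr' fun i => exists_congr fun j => and_congr Iff.rfl
      (and_congr (efEquiv_left_ofList_iff i j) (efEquiv_right_ofList_iff i j)))
    (forall_congr' fun j => exists_congr fun i => and_congr Iff.rfl
      (and_congr (efEquiv_left_ofList_iff i j) (efEquiv_right_ofList_iff i j)))

def efEquivBool [DecidableEq C] : ℕ → List C → List C → Bool
  | 0, _, _ => true
  | n + 1, l, m =>
    let step (i : Fin l.length) (j : Fin m.length) : Bool :=
      l.get i == m.get j && efEquivBool n (l.take i) (m.take j) &&
        efEquivBool n (l.drop (i + 1)) (m.drop (j + 1))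
    (List.finRange l.length).all (fun i => (List.finRange m.length).any (step i)) &&
      (List.finRange m.length).all (fun j => (List.finRange l.length).any (step · j))

theorem efEquiv_ofList_iff [DecidableEq C] {n : ℕ} {l m : List C} :
    EFEquiv n (ofList l) (ofList m) ↔ efEquivBool n l m := by
  induction n generalizing l m with
  | zero => exact iff_of_true trivial rfl
  | succ n ih =>
    rw [efEquiv_succ_ofList_iff]
    simp [efEquivBool, ih, and_assoc]

/-- Positions are natural numbers so that the check can be run over `Fin 15` for a literal list:
instance search does not identify `Fin [..].length` with `Fin 15`. -/
def sameCharBool [DecidableEq C] (n : ℕ) (l : List C) (i j : ℕ) : Bool :=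
  l[i]? == l[j]? && efEquivBool n (l.take i) (l.take j) &&
    efEquivBool n (l.drop (i + 1)) (l.drop (j + 1))

theorem sameChar_ofList_iff [DecidableEq C] {n : ℕ} {l : List C} (a b : Fin l.length) :
    SameChar n (ofList l) a b ↔ sameCharBool n l a b := by
  simp only [SameChar, sameCharBool, efEquiv_left_ofList_iff, efEquiv_right_ofList_iff,
    efEquiv_ofList_iff, Bool.and_eq_true, beq_iff_eq, List.getElem?_eq_getElem a.2,
    List.getElem?_eq_getElem b.2, Option.some_inj, and_assoc]
  rfl

end CLO

open CLO

def rbString : List Bool :=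
  [true, false, true, false, true, false, true, false, true, false, true, false, true, false, true]

def rbCharClass : Fin 15 → Fin 14 := ![0, 1, 2, 3, 4, 5, 6, 7, 6, 8, 9, 10, 11, 12, 13]

theorem sameCharBool_rbString_iff :
    ∀ a b : Fin 15, sameCharBool 2 rbString a b ↔ rbCharClass a = rbCharClass b := by
  decide

theorem sameChar_rbString_iff (a b : Fin 15) :
    SameChar 2 (ofList rbString) a b ↔ rbCharClass a = rbCharClass b :=
  (sameChar_ofList_iff (l := rbString) a b).trans (sameCharBool_rbString_iff a b)

theorem rbCharClass_eq_iff :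
    ∀ a b : Fin 15,
      rbCharClass a = rbCharClass b ↔ a = b ∨ (a = 6 ∧ b = 8) ∨ (a = 8 ∧ b = 6) := by
  decide

/-- in the string `A = rbrbrbrbrbrbrbr` of length 15 (`r = true`, `b = false`),
the 7th and 9th positions (indices 6 and 8) realize the same `2`-character, these are the
only two distinct positions sharing a `2`-character, and `A` realizes exactly 14 distinct
`2`-characters. -/
theorem stmt17 :
    CLO.SameChar 2
      (CLO.ofList [true, false, true, false, true, false, true, false, true, false, true,
        false, true, false, true]) ⟨6, by decide⟩ ⟨8, by decide⟩ ∧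
    (∀ a b : Fin 15,
      CLO.SameChar 2
        (CLO.ofList [true, false, true, false, true, false, true, false, true, false, true,
          false, true, false, true]) a b →
      a = b ∨ (a = ⟨6, by decide⟩ ∧ b = ⟨8, by decide⟩) ∨
        (a = ⟨8, by decide⟩ ∧ b = ⟨6, by decide⟩)) ∧
    (∃ f : Fin 15 → Fin 14, Function.Surjective f ∧
      ∀ a b : Fin 15, f a = f b ↔
        CLO.SameChar 2
          (CLO.ofList [true, false, true, false, true, false, true, false, true, false, true,
            false, true, false, true]) a b) := by
  refine ⟨(sameChar_rbString_iff 6 8).2 rfl, fun a b h => (rbCharClass_eq_iff a b).1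
    ((sameChar_rbString_iff a b).1 h), rbCharClass, by decide,
    fun a b => (sameChar_rbString_iff a b).symm⟩
end
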